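/- arXiv:2105.08320 — 7 statements merged into one kernel-verified Lean document; each statement's English description precedes it below -/
import Mathlib

section
/- Two unbiased qubit observables A^a and A^b, defined by A^a(±) = (1/2)(I ± a·σ) and A^b(±) = (1/2)(I ± b·σ) for vectors a,b ∈ ℝ³ with |a|,|b| ≤ 1, are compatible (admit a joint POVM on four outcomes with the correct marginals) if and only if |a+b| + |a−b| ≤ 2. -/
open Matrix ComplexOrder

noncomputable section

abbrev Mat2 := Matrix (Fin 2) (Fin 2) ℂ

def sigma1 : Mat2 := !![0, 1; 1, 0]
def sigma2 : Mat2 := !![0, -Complex.I; Complex.I, 0]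
def sigma3 : Mat2 := !![1, 0; 0, -1]

/-- `a · σ` for a Bloch vector `a ∈ ℝ³`. -/
def pauliDot (a : EuclideanSpace ℝ (Fin 3)) : Mat2 :=
  (a 0 : ℂ) • sigma1 + (a 1 : ℂ) • sigma2 + (a 2 : ℂ) • sigma3

/-- The unbiased qubit observable `A^a(±) = (1/2)(I ± a·σ)`, `true` = `+`. -/
def qObs (a : EuclideanSpace ℝ (Fin 3)) (s : Bool) : Mat2 :=
  ((1 : ℂ) / 2) • ((1 : Mat2) + (if s then (1 : ℂ) else -1) • pauliDot a)

def IsPOVM {ι : Type*} [Fintype ι] {n : Type*} [Fintype n] [DecidableEq n]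
    (G : ι → Matrix n n ℂ) : Prop :=
  (∀ i, (G i).PosSemidef) ∧ ∑ i, G i = 1

/-!
Every Hermitian `2 × 2` matrix is `(1/2)(t I + v·σ)` for a real `t` and a Bloch vector `v`, and it
is positive semidefinite iff `‖v‖ ≤ t`: its trace is `t` and its determinant `(t² - ‖v‖²)/4`.

If `G` is a joint observable with `G(x,y) = (1/2)(t_{xy} I + v_{xy}·σ)`, the marginal conditions
give `a + b = v_{++} - v_{--}` and `a - b = v_{+-} - v_{-+}`, so by the triangle inequality
`‖a + b‖ + ‖a - b‖ ≤ ∑ t_{xy} = 2`. Conversely, for every `α` the matrices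
`G(x,y) = (1/4)((1 + xyα) I + (xa + yb)·σ)` have marginals `A^a` and `A^b`, and they are positive
as soon as `‖a + b‖ ≤ 1 + α` and `‖a - b‖ ≤ 1 - α`, which `α = ‖a + b‖ - 1` achieves.
-/

namespace Matrix

variable {𝕜 : Type*} [RCLike 𝕜]

lemma IsHermitian.posSemidef_iff_trace_nonneg_and_det_nonneg {A : Matrix (Fin 2) (Fin 2) 𝕜}
    (hA : A.IsHermitian) : A.PosSemidef ↔ 0 ≤ A.trace ∧ 0 ≤ A.det := by
  refine ⟨fun h ↦ ⟨h.trace_nonneg, h.det_nonneg⟩, fun ⟨htr, hdet⟩ ↦ ?_⟩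
  rw [hA.trace_eq_sum_eigenvalues, Fin.sum_univ_two, ← RCLike.ofReal_add,
    RCLike.ofReal_nonneg] at htr
  rw [hA.det_eq_prod_eigenvalues, Fin.prod_univ_two, ← RCLike.ofReal_mul,
    RCLike.ofReal_nonneg] at hdet
  rw [hA.posSemidef_iff_eigenvalues_nonneg, Pi.le_def, Fin.forall_fin_two, Pi.zero_apply,
    Pi.zero_apply]
  constructor <;> nlinarith

end Matrix

def blochMatrix (t : ℝ) (v : EuclideanSpace ℝ (Fin 3)) : Mat2 :=
  ((1 : ℂ) / 2) • ((t : ℂ) • 1 + pauliDot v)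

lemma blochMatrix_eq (t : ℝ) (v : EuclideanSpace ℝ (Fin 3)) :
    blochMatrix t v = !![(t + v 2 : ℂ) / 2, (v 0 - v 1 * Complex.I) / 2;
      (v 0 + v 1 * Complex.I) / 2, (t - v 2 : ℂ) / 2] := by
  ext i j
  fin_cases i <;> fin_cases j <;>
    simp [blochMatrix, pauliDot, sigma1, sigma2, sigma3] <;> ring

lemma blochMatrix_add (t s : ℝ) (v w : EuclideanSpace ℝ (Fin 3)) :
    blochMatrix t v + blochMatrix s w = blochMatrix (t + s) (v + w) := by
  simp only [blochMatrix, pauliDot, PiLp.add_apply]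
  push_cast
  module

lemma isHermitian_blochMatrix (t : ℝ) (v : EuclideanSpace ℝ (Fin 3)) :
    (blochMatrix t v).IsHermitian := by
  rw [blochMatrix_eq]
  ext i j
  fin_cases i <;> fin_cases j <;> simp [Complex.ext_iff]

lemma trace_blochMatrix (t : ℝ) (v : EuclideanSpace ℝ (Fin 3)) :
    (blochMatrix t v).trace = t := by
  rw [blochMatrix_eq, trace_fin_two_of]
  ring

lemma det_blochMatrix (t : ℝ) (v : EuclideanSpace ℝ (Fin 3)) :
    (blochMatrix t v).det = ((t ^ 2 - ‖v‖ ^ 2) / 4 : ℝ) := by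
  rw [blochMatrix_eq, det_fin_two_of, EuclideanSpace.real_norm_sq_eq, Fin.sum_univ_three]
  push_cast
  ring_nf
  simp only [Complex.I_sq]
  ring

lemma posSemidef_blochMatrix_iff {t : ℝ} {v : EuclideanSpace ℝ (Fin 3)} :
    (blochMatrix t v).PosSemidef ↔ ‖v‖ ≤ t := by
  rw [(isHermitian_blochMatrix t v).posSemidef_iff_trace_nonneg_and_det_nonneg,
    trace_blochMatrix, det_blochMatrix, Complex.zero_le_real, Complex.zero_le_real]
  constructor
  · rintro ⟨ht, hdet⟩
    exact abs_le_of_sq_le_sq' (by linarith) ht |>.2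
  · intro h
    have := norm_nonneg v
    constructor <;> nlinarith

def blochVector (M : Mat2) : EuclideanSpace ℝ (Fin 3) :=
  !₂[(M 0 1).re + (M 1 0).re, (M 1 0).im - (M 0 1).im, (M 0 0).re - (M 1 1).re]

lemma blochVector_add (M N : Mat2) : blochVector (M + N) = blochVector M + blochVector N := by
  ext i
  fin_cases i <;> simp [blochVector] <;> ring

lemma blochVector_blochMatrix (t : ℝ) (v : EuclideanSpace ℝ (Fin 3)) :
    blochVector (blochMatrix t v) = v := by
  ext i
  fin_cases i <;> simp [blochVector, blochMatrix_eq] <;> ring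

lemma Matrix.IsHermitian.blochMatrix_trace_re_blochVector {M : Mat2} (hM : M.IsHermitian) :
    blochMatrix M.trace.re (blochVector M) = M := by
  have h01 : M 1 0 = star (M 0 1) := (hM.apply 1 0).symm
  have h00 : (M 0 0).im = 0 := Complex.conj_eq_iff_im.mp (hM.apply 0 0)
  have h11 : (M 1 1).im = 0 := Complex.conj_eq_iff_im.mp (hM.apply 1 1)
  rw [blochMatrix_eq]
  ext i j
  fin_cases i <;> fin_cases j <;> simp [blochVector, trace_fin_two, Complex.ext_iff, h01, h00, h11]
  ring

lemma norm_blochVector_le {M : Mat2} (hM : M.PosSemidef) : ‖blochVector M‖ ≤ M.trace.re := by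
  rw [← posSemidef_blochMatrix_iff, hM.isHermitian.blochMatrix_trace_re_blochVector]
  exact hM

def boolSign (s : Bool) : ℝ := if s then 1 else -1

@[simp] lemma boolSign_true : boolSign true = 1 := rfl

@[simp] lemma boolSign_false : boolSign false = -1 := rfl

lemma qObs_eq_blochMatrix (a : EuclideanSpace ℝ (Fin 3)) (s : Bool) :
    qObs a s = blochMatrix 1 (boolSign s • a) := by
  cases s <;> simp [qObs, blochMatrix, boolSign, pauliDot]

lemma qObs_true_add_qObs_false (a : EuclideanSpace ℝ (Fin 3)) :
    qObs a true + qObs a false = 1 := by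
  simp only [qObs, if_true, Bool.false_eq_true, if_false]
  module

lemma trace_qObs (a : EuclideanSpace ℝ (Fin 3)) (s : Bool) : (qObs a s).trace = 1 := by
  rw [qObs_eq_blochMatrix, trace_blochMatrix, Complex.ofReal_one]

lemma blochVector_qObs (a : EuclideanSpace ℝ (Fin 3)) (s : Bool) :
    blochVector (qObs a s) = boolSign s • a := by
  rw [qObs_eq_blochMatrix, blochVector_blochMatrix]

lemma norm_add_add_norm_sub_le_two_of_marginals {a b : EuclideanSpace ℝ (Fin 3)}
    {G : Bool × Bool → Mat2} (hG : ∀ xy, (G xy).PosSemidef)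
    (hGa : ∀ x, G (x, true) + G (x, false) = qObs a x)
    (hGb : ∀ y, G (true, y) + G (false, y) = qObs b y) :
    ‖a + b‖ + ‖a - b‖ ≤ 2 := by
  set v := fun xy ↦ blochVector (G xy)
  have hv (xy : Bool × Bool) : ‖v xy‖ ≤ (G xy).trace.re := norm_blochVector_le (hG xy)
  have htr (x : Bool) : (G (x, true)).trace.re + (G (x, false)).trace.re = 1 := by
    rw [← Complex.add_re, ← trace_add, hGa, trace_qObs, Complex.one_re]
  have ha : v (true, true) + v (true, false) = a := by
    rw [← blochVector_add, hGa, blochVector_qObs, boolSign_true, one_smul]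
  have hb : v (true, true) + v (false, true) = b := by
    rw [← blochVector_add, hGb, blochVector_qObs, boolSign_true, one_smul]
  have hnb : v (true, false) + v (false, false) = -b := by
    rw [← blochVector_add, hGb, blochVector_qObs, boolSign_false, neg_one_smul]
  calc ‖a + b‖ + ‖a - b‖
      = ‖v (true, true) - v (false, false)‖ + ‖v (true, false) - v (false, true)‖ := by
        congr 2
        · linear_combination (norm := module) hnb - ha
        · linear_combination (norm := module) hb - ha
    _ ≤ (‖v (true, true)‖ + ‖v (false, false)‖) + (‖v (true, false)‖ + ‖v (false, true)‖) :=
        add_le_add (norm_sub_le _ _) (norm_sub_le _ _)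
    _ ≤ 2 := by
        linarith [hv (true, true), hv (false, false), hv (true, false), hv (false, true),
          htr true, htr false]

def jointObs (a b : EuclideanSpace ℝ (Fin 3)) (α : ℝ) (xy : Bool × Bool) : Mat2 :=
  blochMatrix ((1 + boolSign xy.1 * boolSign xy.2 * α) / 2)
    ((1 / 2 : ℝ) • (boolSign xy.1 • a + boolSign xy.2 • b))

lemma jointObs_posSemidef {a b : EuclideanSpace ℝ (Fin 3)} {α : ℝ} (hplus : ‖a + b‖ ≤ 1 + α)
    (hminus : ‖a - b‖ ≤ 1 - α) (xy : Bool × Bool) : (jointObs a b α xy).PosSemidef := by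
  rw [jointObs, posSemidef_blochMatrix_iff, norm_smul]
  have h₁ : ‖-a + -b‖ = ‖a + b‖ := by rw [← neg_add, norm_neg]
  have h₂ : ‖-a + b‖ = ‖a - b‖ := by rw [neg_add_eq_sub, norm_sub_rev]
  have h₃ : ‖a + -b‖ = ‖a - b‖ := by rw [← sub_eq_add_neg]
  obtain ⟨_ | _, _ | _⟩ := xy <;>
    simp only [boolSign_true, boolSign_false, one_smul, neg_one_smul, h₁, h₂, h₃] <;>
    norm_num <;> linarith

lemma jointObs_fst_marginal (a b : EuclideanSpace ℝ (Fin 3)) (α : ℝ) (x : Bool) :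
    jointObs a b α (x, true) + jointObs a b α (x, false) = qObs a x := by
  rw [jointObs, jointObs, blochMatrix_add, qObs_eq_blochMatrix]
  congr 1
  · simp only [boolSign_true, boolSign_false]; ring
  · simp only [boolSign_true, boolSign_false]; module

lemma jointObs_snd_marginal (a b : EuclideanSpace ℝ (Fin 3)) (α : ℝ) (y : Bool) :
    jointObs a b α (true, y) + jointObs a b α (false, y) = qObs b y := by
  rw [jointObs, jointObs, blochMatrix_add, qObs_eq_blochMatrix]
  congr 1
  · simp only [boolSign_true, boolSign_false]; ring
  · simp only [boolSign_true, boolSign_false]; module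

theorem qubit_unbiased_compatible_iff_general (a b : EuclideanSpace ℝ (Fin 3)) :
    (∃ G : Bool × Bool → Mat2, IsPOVM G ∧
      (∀ x, G (x, true) + G (x, false) = qObs a x) ∧
      (∀ y, G (true, y) + G (false, y) = qObs b y)) ↔
    ‖a + b‖ + ‖a - b‖ ≤ 2 := by
  constructor
  · rintro ⟨G, ⟨hG, -⟩, hGa, hGb⟩
    exact norm_add_add_norm_sub_le_two_of_marginals hG hGa hGb
  · intro h
    refine ⟨jointObs a b (‖a + b‖ - 1),
      ⟨jointObs_posSemidef (by linarith) (by linarith), ?_⟩,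
      jointObs_fst_marginal a b _, jointObs_snd_marginal a b _⟩
    rw [Fintype.sum_prod_type, Fintype.sum_bool, Fintype.sum_bool, Fintype.sum_bool,
      jointObs_fst_marginal, jointObs_fst_marginal, qObs_true_add_qObs_false]

/-- Two unbiased qubit observables `A^a`, `A^b` are compatible (admit a joint POVM on four
outcomes with the correct marginals) iff `|a+b| + |a−b| ≤ 2`. -/
theorem qubit_unbiased_compatible_iff (a b : EuclideanSpace ℝ (Fin 3))
    (ha : ‖a‖ ≤ 1) (hb : ‖b‖ ≤ 1) :
    (∃ G : Bool × Bool → Mat2, IsPOVM G ∧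
      (∀ x, G (x, true) + G (x, false) = qObs a x) ∧
      (∀ y, G (true, y) + G (false, y) = qObs b y)) ↔
    ‖a + b‖ + ‖a - b‖ ≤ 2 :=
  qubit_unbiased_compatible_iff_general a b
end
end

section
/- Let P and Q be noncommuting rank-one orthogonal projections on a d-dimensional Hilbert space, and define dichotomic observables A = (P, I−P) and B = (Q, I−Q). Set ρ_P = (I−P)/(d−1) and ρ_Q = (I−Q)/(d−1). Then there is no POVM G on {0,1}×{0,1} such that tr[ρ G(1,0)] + tr[ρ G(1,1)] = tr[ρ P] and tr[ρ G(0,1)] + tr[ρ G(1,1)] = tr[ρ Q] hold for both ρ = ρ_P and ρ = ρ_Q. -/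
open Matrix ComplexOrder

noncomputable section

/-!
The trace of a product of two positive semidefinite matrices is nonnegative and vanishes only
if the product does. Testing the marginal conditions on `ρ_P ∝ 1 - P` therefore gives
`(1 - P) G(1,0) = (1 - P) G(1,1) = 0`, so, `P` having rank one, `G(1,0)` and `G(1,1)` are
multiples of `P`; symmetrically `G(0,1)` and `G(1,1)` are multiples of `Q`, whence
`G(1,1) = 0` as `P ≠ Q`. Since `P` and `Q` do not commute, `tr((1 - Q) P) ≠ 0`, and the two
remaining conditions force `G(1,0) = P` and `G(0,1) = Q`. Then `G(0,0) = 1 - P - Q ≥ 0`, i.e.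
`Q ≤ 1 - P`, and comparable projections commute.
-/

open scoped MatrixOrder

namespace Matrix

lemma trace_conjTranspose_mul_self_mul_conjTranspose_mul_self {m n k R : Type*} [Fintype m]
    [Fintype n] [Fintype k] [CommSemiring R] [StarRing R] (a : Matrix m n R)
    (b : Matrix k n R) : (aᴴ * a * (bᴴ * b)).trace = ((a * bᴴ)ᴴ * (a * bᴴ)).trace := by
  rw [conjTranspose_mul, conjTranspose_conjTranspose, ← Matrix.mul_assoc, trace_mul_comm]
  simp only [Matrix.mul_assoc]

lemma eq_zero_of_smul_eq_smul_of_trace_eq_one {n K : Type*} [Fintype n] [Field K]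
    {P Q : Matrix n n K} (hP : P.trace = 1) (hQ : Q.trace = 1) (hPQ : P ≠ Q) {a b : K}
    (h : a • P = b • Q) : a = 0 := by
  have hab : a = b := by simpa [hP, hQ] using congr(trace $h)
  subst hab
  by_contra ha
  exact hPQ (smul_right_injective _ ha h)

variable {n 𝕜 : Type*} [Fintype n] [DecidableEq n] [RCLike 𝕜] {A B : Matrix n n 𝕜}

lemma PosSemidef.trace_mul_nonneg (hA : A.PosSemidef) (hB : B.PosSemidef) :
    0 ≤ (A * B).trace := by
  obtain ⟨a, rfl⟩ := CStarAlgebra.nonneg_iff_eq_star_mul_self.mp hA.nonneg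
  obtain ⟨b, rfl⟩ := CStarAlgebra.nonneg_iff_eq_star_mul_self.mp hB.nonneg
  rw [star_eq_conjTranspose, star_eq_conjTranspose,
    trace_conjTranspose_mul_self_mul_conjTranspose_mul_self]
  exact (posSemidef_conjTranspose_mul_self _).trace_nonneg

lemma PosSemidef.mul_eq_zero_of_trace_mul_eq_zero (hA : A.PosSemidef) (hB : B.PosSemidef)
    (h : (A * B).trace = 0) : A * B = 0 := by
  obtain ⟨a, rfl⟩ := CStarAlgebra.nonneg_iff_eq_star_mul_self.mp hA.nonneg
  obtain ⟨b, rfl⟩ := CStarAlgebra.nonneg_iff_eq_star_mul_self.mp hB.nonneg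
  rw [star_eq_conjTranspose, star_eq_conjTranspose,
    trace_conjTranspose_mul_self_mul_conjTranspose_mul_self,
    trace_conjTranspose_mul_self_eq_zero_iff] at h
  calc aᴴ * a * (bᴴ * b) = aᴴ * (a * bᴴ) * b := by simp only [mul_assoc]
    _ = 0 := by rw [h, mul_zero, zero_mul]

end Matrix

namespace IsStarProjection

lemma commute_of_add_le_one {A : Type*} [CStarAlgebra A] [PartialOrder A] [StarOrderedRing A]
    {p q : A} (hp : IsStarProjection p) (hq : IsStarProjection q) (h : p + q ≤ 1) :
    Commute p q := by
  have hq_le : q ≤ 1 - p := by rwa [le_sub_iff_add_le']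
  simpa using (hq.commute_of_le hp.one_sub hq_le).symm.sub_left (Commute.one_left q)

variable {n 𝕜 : Type*} [Fintype n] [DecidableEq n] [RCLike 𝕜] {P Q : Matrix n n 𝕜}

lemma exists_eq_vecMulVec_star (hP : IsStarProjection P) (htr : P.trace = 1) :
    ∃ u : n → 𝕜, P = vecMulVec u (star u) := by
  have hPh : P.IsHermitian := hP.isSelfAdjoint
  obtain ⟨i, hi⟩ : ∃ i, hPh.eigenvalues i ≠ 0 := by
    by_contra! h
    simp [hPh.trace_eq_sum_eigenvalues, h] at htr
  set u : n → 𝕜 := ⇑(hPh.eigenvectorBasis i)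
  have hu : star u ⬝ᵥ u = 1 := by
    rw [dotProduct_comm, ← EuclideanSpace.inner_eq_star_dotProduct]
    simp
  have hPu : P *ᵥ u = u := by
    have hu0 : u ≠ 0 := by rintro h; simp [h] at hu
    have hev : P *ᵥ u = hPh.eigenvalues i • u := hPh.mulVec_eigenvectorBasis i
    have hsq : (hPh.eigenvalues i * hPh.eigenvalues i) • u = hPh.eigenvalues i • u := by
      rw [mul_smul, ← hev, ← mulVec_smul, ← hev, mulVec_mulVec, hP.isIdempotentElem.eq]
    rwa [(mul_eq_right₀ hi).mp (smul_left_injective ℝ hu0 hsq), one_smul] at hev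
  set R := vecMulVec u (star u)
  have hR : IsStarProjection R :=
    ⟨by simp [R, IsIdempotentElem, vecMulVec_mul_vecMulVec, hu],
     by simp [R, IsSelfAdjoint, star_eq_conjTranspose, conjTranspose_vecMulVec]⟩
  have hPR : P * R = R := by rw [mul_vecMulVec, hPu]
  -- `P - R` is a projection of trace zero
  refine ⟨u, sub_eq_zero.mp ?_⟩
  refine (hR.sub_of_mul_eq_right hP hPR).nonneg.posSemidef.trace_eq_zero_iff.mp ?_
  rw [trace_sub, htr, trace_vecMulVec, dotProduct_comm, hu, sub_self]

lemma mul_mul_self_eq_trace_mul_smul (hP : IsStarProjection P) (htr : P.trace = 1)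
    (M : Matrix n n 𝕜) : P * M * P = (P * M).trace • P := by
  obtain ⟨u, rfl⟩ := hP.exists_eq_vecMulVec_star htr
  rw [vecMulVec_mul, vecMulVec_mul_vecMulVec, trace_vecMulVec, dotProduct_comm u,
    vecMulVec_smul]

lemma eq_trace_mul_smul_of_trace_one_sub_mul_eq_zero (hP : IsStarProjection P)
    (htr : P.trace = 1) {X : Matrix n n 𝕜} (hX : X.PosSemidef)
    (h : ((1 - P) * X).trace = 0) : X = (P * X).trace • P := by
  have hPX : P * X = X := by
    have := hP.one_sub.nonneg.posSemidef.mul_eq_zero_of_trace_mul_eq_zero hX h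
    rwa [sub_mul, one_mul, sub_eq_zero, eq_comm] at this
  have hXP : X * P = X := by
    simpa [hP.isSelfAdjoint.star_eq, hX.isHermitian.isSelfAdjoint.star_eq] using
      congr(star $hPX)
  rw [← hP.mul_mul_self_eq_trace_mul_smul htr, hPX, hXP]

lemma eq_trace_mul_smul_of_trace_one_sub_mul_add_eq_zero (hP : IsStarProjection P)
    (htr : P.trace = 1) {X Y : Matrix n n 𝕜} (hX : X.PosSemidef) (hY : Y.PosSemidef)
    (h : ((1 - P) * X).trace + ((1 - P) * Y).trace = 0) :
    X = (P * X).trace • P ∧ Y = (P * Y).trace • P := by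
  have hP' := hP.one_sub.nonneg.posSemidef
  obtain ⟨hX0, hY0⟩ :=
    (add_eq_zero_iff_of_nonneg (hP'.trace_mul_nonneg hX) (hP'.trace_mul_nonneg hY)).mp h
  exact ⟨hP.eq_trace_mul_smul_of_trace_one_sub_mul_eq_zero htr hX hX0,
    hP.eq_trace_mul_smul_of_trace_one_sub_mul_eq_zero htr hY hY0⟩

lemma commute_of_trace_one_sub_mul_eq_zero (hP : IsStarProjection P)
    (hQ : IsStarProjection Q) (h : ((1 - Q) * P).trace = 0) : Commute P Q := by
  have hQP : Q * P = P := by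
    have := hQ.one_sub.nonneg.posSemidef.mul_eq_zero_of_trace_mul_eq_zero hP.nonneg.posSemidef h
    rwa [sub_mul, one_mul, sub_eq_zero, eq_comm] at this
  have hPQ : P * Q = P := by
    simpa [hP.isSelfAdjoint.star_eq, hQ.isSelfAdjoint.star_eq] using congr(star $hQP)
  rw [commute_iff_eq, hPQ, hQP]

lemma eq_one_of_trace_one_sub_mul_smul_eq (hP : IsStarProjection P)
    (hQ : IsStarProjection Q) (hPQ : ¬ Commute P Q) {a : 𝕜}
    (h : ((1 - Q) * (a • P)).trace = ((1 - Q) * P).trace) : a = 1 := by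
  rw [mul_smul_comm, trace_smul, smul_eq_mul] at h
  exact (mul_eq_right₀ (mt (hP.commute_of_trace_one_sub_mul_eq_zero hQ) hPQ)).mp h

end IsStarProjection

-- makes complex matrices a C⋆-algebra
open scoped Matrix.Norms.L2Operator

/-- For noncommuting rank-one projections `P`, `Q` on a `d`-dimensional space, no POVM
`G` on `{0,1}×{0,1}` reproduces the outcome probabilities of `A = (P, I−P)` and
`B = (Q, I−Q)` on the two states `ρ_P = (I−P)/(d−1)` and `ρ_Q = (I−Q)/(d−1)`. -/
theorem rank_one_proj_two_state_incompatible {d : ℕ} (hd : 2 ≤ d)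
    (P Q : Matrix (Fin d) (Fin d) ℂ)
    (hPh : P.IsHermitian) (hPp : P * P = P) (hPr : P.trace = 1)
    (hQh : Q.IsHermitian) (hQp : Q * Q = Q) (hQr : Q.trace = 1)
    (hnc : P * Q ≠ Q * P) :
    ¬ ∃ G : Fin 2 × Fin 2 → Matrix (Fin d) (Fin d) ℂ, IsPOVM G ∧
      ∀ ρ ∈ ({((d : ℂ) - 1)⁻¹ • ((1 : Matrix (Fin d) (Fin d) ℂ) - P),
              ((d : ℂ) - 1)⁻¹ • ((1 : Matrix (Fin d) (Fin d) ℂ) - Q)} :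
              Set (Matrix (Fin d) (Fin d) ℂ)),
        (ρ * G (1, 0)).trace + (ρ * G (1, 1)).trace = (ρ * P).trace ∧
        (ρ * G (0, 1)).trace + (ρ * G (1, 1)).trace = (ρ * Q).trace := by
  rintro ⟨G, ⟨hG, hGsum⟩, hρ⟩
  have hP : IsStarProjection P := ⟨hPp, hPh⟩
  have hQ : IsStarProjection Q := ⟨hQp, hQh⟩
  have hc : ((d : ℂ) - 1)⁻¹ ≠ 0 :=
    inv_ne_zero (sub_ne_zero.mpr (by exact_mod_cast (by omega)))
  obtain ⟨hP10, hP01⟩ := hρ _ (Set.mem_insert _ _)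
  obtain ⟨hQ10, hQ01⟩ := hρ _ (Set.mem_insert_of_mem _ rfl)
  simp only [smul_mul_assoc, trace_smul, smul_eq_mul, ← mul_add, mul_right_inj' hc,
    hP.one_sub_mul_self, hQ.one_sub_mul_self, trace_zero] at hP10 hP01 hQ10 hQ01
  obtain ⟨hG10, hG11P⟩ :=
    hP.eq_trace_mul_smul_of_trace_one_sub_mul_add_eq_zero hPr (hG _) (hG _) hP10
  obtain ⟨hG01, hG11Q⟩ :=
    hQ.eq_trace_mul_smul_of_trace_one_sub_mul_add_eq_zero hQr (hG _) (hG _) hQ01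
  have hG11 : G (1, 1) = 0 := by
    rw [hG11P, eq_zero_of_smul_eq_smul_of_trace_eq_one hPr hQr (by rintro rfl; exact hnc rfl)
      (hG11P.symm.trans hG11Q), zero_smul]
  rw [hG11, mul_zero, trace_zero, add_zero] at hP01 hQ10
  have hG10P : G (1, 0) = P := by
    rw [hG10] at hQ10 ⊢
    rw [hP.eq_one_of_trace_one_sub_mul_smul_eq hQ hnc hQ10, one_smul]
  have hG01Q : G (0, 1) = Q := by
    rw [hG01] at hP01 ⊢
    rw [hQ.eq_one_of_trace_one_sub_mul_smul_eq hP (Ne.symm hnc) hP01, one_smul]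
  have hG00 : G (0, 0) = 1 - P - Q := by
    rw [← hGsum, Fintype.sum_prod_type, Fin.sum_univ_two, Fin.sum_univ_two, Fin.sum_univ_two,
      hG01Q, hG10P, hG11]
    abel
  have hPQ : P + Q ≤ 1 := by
    rw [← sub_nonneg, ← sub_sub, ← hG00]
    exact (hG _).nonneg
  exact hnc (hP.commute_of_add_le_one hQ hPQ)
end
end

section
/- If ρ₁, …, ρ_k are perfectly distinguishable states (i.e., there exists a POVM E with tr[ρ_i E(j)] = δ_{ij}), then any two observables A and B are {ρ₁,…,ρ_k}-compatible: the POVM G(x,y) := Σ_i tr[ρ_i A(x)] tr[ρ_i B(y)] E(i) has marginals agreeing with A and B on each ρ_j. -/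
open Matrix ComplexOrder

noncomputable section

def IsState {n : Type*} [Fintype n] [DecidableEq n] (ρ : Matrix n n ℂ) : Prop :=
  ρ.PosSemidef ∧ ρ.trace = 1

/-! Distinguishing the states with `E`, then sampling the outcomes of `A` and `B` independently
from the distributions `tr[ρᵢ A(·)]`, `tr[ρᵢ B(·)]` of the guessed state `i`, is a classical
post-processing of `E`, hence a POVM. On the states `ρⱼ` the guess is always right, so this
POVM outputs exactly the product distribution `tr[ρⱼ A(x)] tr[ρⱼ B(y)]`, whose marginals are
those of `A` and `B`. -/

open scoped MatrixOrder in
theorem Matrix.PosSemidef.trace_mul_nonneg_s4 {n 𝕜 : Type*} [Fintype n] [DecidableEq n] [RCLike 𝕜]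
    {P Q : Matrix n n 𝕜} (hP : P.PosSemidef) (hQ : Q.PosSemidef) : 0 ≤ (P * Q).trace := by
  have hS : (CFC.sqrt P)ᴴ = CFC.sqrt P := (CFC.sqrt_nonneg P).isSelfAdjoint.star_eq
  rw [← CFC.sqrt_mul_sqrt_self P hP.nonneg, Matrix.mul_assoc, trace_mul_comm]
  simpa only [hS] using (hQ.conjTranspose_mul_mul_same (CFC.sqrt P)).trace_nonneg

section

variable {n ι κ : Type*} [Fintype n] [Fintype ι] [Fintype κ]

theorem IsState.sum_trace_mul_povm [DecidableEq n] {ρ : Matrix n n ℂ} (hρ : IsState ρ)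
    {M : ι → Matrix n n ℂ} (hM : IsPOVM M) : ∑ i, (ρ * M i).trace = 1 := by
  rw [← trace_sum, ← Finset.mul_sum, hM.2, Matrix.mul_one, hρ.2]

theorem IsPOVM.sum_smul [DecidableEq n] {E : ι → Matrix n n ℂ} (hE : IsPOVM E) {c : ι → κ → ℂ}
    (hc_nonneg : ∀ i p, 0 ≤ c i p) (hc_sum : ∀ i, ∑ p, c i p = 1) :
    IsPOVM (fun p => ∑ i, c i p • E i) := by
  refine ⟨fun p => posSemidef_sum _ fun i _ => (hE.1 i).smul (hc_nonneg i p), ?_⟩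
  rw [Finset.sum_comm]
  simp only [← Finset.sum_smul, hc_sum, one_smul]
  exact hE.2

theorem trace_mul_sum_smul_of_distinguishes [DecidableEq ι] {ρ E : ι → Matrix n n ℂ}
    (hdist : ∀ i j, (ρ i * E j).trace = if i = j then 1 else 0) (c : ι → ℂ) (j : ι) :
    (ρ j * ∑ i, c i • E i).trace = c j := by
  simp [Matrix.mul_sum, trace_sum, trace_smul, hdist]

end

/-- If `ρ₁,…,ρ_k` are perfectly distinguishable states (by a POVM `E` with
`tr[ρᵢE(j)] = δᵢⱼ`), then any two observables `A`, `B` are `{ρ₁,…,ρ_k}`-compatible: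
the POVM `G(x,y) = Σᵢ tr[ρᵢA(x)] tr[ρᵢB(y)] E(i)` has marginals agreeing with `A` and
`B` on each `ρⱼ`. -/
theorem distinguishable_states_compatible {d k : ℕ} {X Y : Type*} [Fintype X] [Fintype Y]
    (ρ : Fin k → Matrix (Fin d) (Fin d) ℂ) (hρ : ∀ i, IsState (ρ i))
    (E : Fin k → Matrix (Fin d) (Fin d) ℂ) (hE : IsPOVM E)
    (hdist : ∀ i j, (ρ i * E j).trace = if i = j then 1 else 0)
    (A : X → Matrix (Fin d) (Fin d) ℂ) (B : Y → Matrix (Fin d) (Fin d) ℂ)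
    (hA : IsPOVM A) (hB : IsPOVM B) :
    IsPOVM (fun p : X × Y =>
      ∑ i, ((ρ i * A p.1).trace * (ρ i * B p.2).trace) • E i) ∧
    ∀ j, (∀ x, ∑ y, (ρ j * (∑ i, ((ρ i * A x).trace * (ρ i * B y).trace) • E i)).trace
            = (ρ j * A x).trace) ∧
         (∀ y, ∑ x, (ρ j * (∑ i, ((ρ i * A x).trace * (ρ i * B y).trace) • E i)).trace
            = (ρ j * B y).trace) := by
  have hprod_nonneg (i : Fin k) (p : X × Y) :
      0 ≤ (ρ i * A p.1).trace * (ρ i * B p.2).trace :=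
    mul_nonneg ((hρ i).1.trace_mul_nonneg_s4 (hA.1 p.1)) ((hρ i).1.trace_mul_nonneg_s4 (hB.1 p.2))
  have hprod_sum (i : Fin k) : ∑ p : X × Y, (ρ i * A p.1).trace * (ρ i * B p.2).trace = 1 := by
    simp only [Fintype.sum_prod_type, ← Fintype.sum_mul_sum, (hρ i).sum_trace_mul_povm hA,
      (hρ i).sum_trace_mul_povm hB, one_mul]
  refine ⟨hE.sum_smul hprod_nonneg hprod_sum, fun j => ⟨fun x => ?_, fun y => ?_⟩⟩
  · simp only [trace_mul_sum_smul_of_distinguishes hdist, ← Finset.mul_sum,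
      (hρ j).sum_trace_mul_povm hB, mul_one]
  · simp only [trace_mul_sum_smul_of_distinguishes hdist, ← Finset.sum_mul,
      (hρ j).sum_trace_mul_povm hA, one_mul]
end
end

section
/- Let A₁,…,A_n be incompatible observables with m₁,…,m_n outcomes on a finite-dimensional Hilbert space. Then there exists a subset of states S₀ with affine dimension at most Σ_j m_j − n on which A₁,…,A_n are S₀-incompatible; i.e., the incompatibility dimension satisfies χ_incomp(A₁,…,A_n) ≤ Σ_{j=1}^n m_j − n + 1. -/
open Matrix ComplexOrder

noncomputable section

/-- `S₀`-compatibility of an `n`-tuple of observables: a joint POVM whose marginal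
outcome probabilities agree with those of the tuple on every state in `S₀`. -/
def SCompat {d n : ℕ} {m : Fin n → ℕ}
    (A : (j : Fin n) → Fin (m j) → Matrix (Fin d) (Fin d) ℂ)
    (S₀ : Set (Matrix (Fin d) (Fin d) ℂ)) : Prop :=
  ∃ G : ((j : Fin n) → Fin (m j)) → Matrix (Fin d) (Fin d) ℂ, IsPOVM G ∧
    ∀ ρ ∈ S₀, ∀ (j : Fin n) (x : Fin (m j)),
      ∑ g ∈ Finset.univ.filter (fun g : (j : Fin n) → Fin (m j) => g j = x),
        (ρ * G g).trace = (ρ * A j x).trace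

/-- The incompatibility dimension: minimal `dim aff S₀ + 1` over subsets of states on
which the tuple is `S₀`-incompatible. -/
def chiIncomp {d n : ℕ} {m : Fin n → ℕ}
    (A : (j : Fin n) → Fin (m j) → Matrix (Fin d) (Fin d) ℂ) : ℕ :=
  sInf {k : ℕ | ∃ S₀ : Set (Matrix (Fin d) (Fin d) ℂ),
    (∀ ρ ∈ S₀, IsState ρ) ∧ ¬ SCompat A S₀ ∧
    k = Module.finrank ℝ (vectorSpan ℝ S₀) + 1}

/-!
Incompatibility says that the tuple `(A j x)` is not the family of marginals of any joint POVM.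
Joint POVMs form a compact convex set, so its image under the linear marginal map is strictly
separated from `A` by a real functional, which `Re tr` represents by Hermitian matrices `H j x`.
The marginals of a POVM and `A j` itself both sum to `1` over `x`, so `H j x` may be shifted by a
matrix depending on `j` alone; this makes every `H j x` positive definite and every `H j x₀` the
same multiple of `1`. On the normalised states `H j x / tr (H j x)` a compatible joint POVM would
turn the separating inequality into an equality, and as the `n` states `H j x₀` coincide, these
`Σ_j m_j` states span an affine space of dimension at most `Σ_j m_j - n`.
-/

namespace Matrix

variable {ι k : Type*} [Fintype ι] [Fintype k]

section Order

open scoped Norms.L2Operator MatrixOrder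

variable [DecidableEq k]

lemma IsHermitian.posSemidef_add_norm_smul_one {B : Matrix k k ℂ} (hB : B.IsHermitian) :
    (B + ‖B‖ • (1 : Matrix k k ℂ)).PosSemidef := by
  rw [← nonneg_iff_posSemidef, ← neg_le_iff_add_nonneg, ← Algebra.algebraMap_eq_smul_one]
  exact hB.isSelfAdjoint.neg_algebraMap_norm_le_self

lemma exists_posDef_add_smul_one {B : ι → Matrix k k ℂ}
    (hB : ∀ i, (B i).IsHermitian) : ∃ t : ℝ, ∀ i, (B i + t • (1 : Matrix k k ℂ)).PosDef := by
  obtain ⟨t, ht⟩ := Finite.exists_le fun i => ‖B i‖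
  refine ⟨t + 1, fun i => ?_⟩
  have hpos : 0 < t + 1 - ‖B i‖ := by linarith [ht i]
  have hsplit : B i + (t + 1) • (1 : Matrix k k ℂ)
      = (B i + ‖B i‖ • 1) + (t + 1 - ‖B i‖) • 1 := by
    rw [add_assoc, ← add_smul, add_sub_cancel]
  rw [hsplit]
  exact PosDef.posSemidef_add (hB i).posSemidef_add_norm_smul_one (PosDef.one.smul hpos)

end Order

lemma PosDef.isState_inv_re_trace_smul [DecidableEq k] [Nonempty k] {P : Matrix k k ℂ}
    (hP : P.PosDef) : IsState (P.trace.re⁻¹ • P) := by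
  obtain ⟨hre, him⟩ := Complex.pos_iff.mp hP.trace_pos
  refine ⟨hP.posSemidef.smul (inv_nonneg.mpr hre.le), ?_⟩
  have htrace : P.trace = (P.trace.re : ℂ) := Complex.ext rfl (by simp [← him])
  rw [trace_smul, htrace, Complex.real_smul, ← Complex.ofReal_mul, Complex.ofReal_re,
    inv_mul_cancel₀ hre.ne', Complex.ofReal_one]

lemma re_trace_mul_conjTranspose_self_eq_zero_iff {X : Matrix k k ℂ} :
    (X * Xᴴ).trace.re = 0 ↔ X = 0 := by
  obtain ⟨-, him⟩ := Complex.nonneg_iff.mp (posSemidef_self_mul_conjTranspose X).trace_nonneg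
  rw [← trace_mul_conjTranspose_self_eq_zero_iff, Complex.ext_iff]
  simp [← him]

lemma IsHermitian.re_trace_conjTranspose_mul {X : Matrix k k ℂ} (hX : X.IsHermitian)
    (H : Matrix k k ℂ) : (Hᴴ * X).trace.re = (H * X).trace.re := by
  rw [← hX.eq, ← conjTranspose_mul, trace_conjTranspose, hX.eq, trace_mul_comm]
  rfl

variable (ι k) in
def reTracePairing : LinearMap.BilinForm ℝ (ι → Matrix k k ℂ) :=
  LinearMap.mk₂ ℝ (fun X Y => ∑ i, (X i * Y i).trace.re)
    (fun X X' Y => by simp [add_mul, Finset.sum_add_distrib])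
    (fun c X Y => by simp [Finset.mul_sum])
    (fun X Y Y' => by simp [mul_add, Finset.sum_add_distrib])
    (fun c X Y => by simp [Finset.mul_sum])

lemma reTracePairing_apply (X Y : ι → Matrix k k ℂ) :
    reTracePairing ι k X Y = ∑ i, (X i * Y i).trace.re := rfl

lemma reTracePairing_nondegenerate : (reTracePairing ι k).Nondegenerate := by
  have hsymm : (reTracePairing ι k).IsSymm := ⟨fun X Y => by
    simp only [reTracePairing_apply, trace_mul_comm (X _)]⟩
  refine hsymm.isRefl.nondegenerate_iff_separatingLeft.mpr fun X hX => ?_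
  have hsum := hX fun i => (X i)ᴴ
  rw [reTracePairing_apply, Finset.sum_eq_zero_iff_of_nonneg fun i _ =>
    (Complex.nonneg_iff.mp (posSemidef_self_mul_conjTranspose (X i)).trace_nonneg).1] at hsum
  exact funext fun i => re_trace_mul_conjTranspose_self_eq_zero_iff.mp (hsum i (Finset.mem_univ i))

lemma exists_isHermitian_eq_sum_re_trace (f : Module.Dual ℝ (ι → Matrix k k ℂ)) :
    ∃ H : ι → Matrix k k ℂ, (∀ i, (H i).IsHermitian) ∧
      ∀ X : ι → Matrix k k ℂ, (∀ i, (X i).IsHermitian) → f X = ∑ i, (H i * X i).trace.re := by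
  set H₀ := ((reTracePairing ι k).toDual reTracePairing_nondegenerate).symm f
  refine ⟨fun i => (2 : ℝ)⁻¹ • (H₀ i + (H₀ i)ᴴ), fun i => ?_, fun X hX => ?_⟩
  · simp [IsHermitian, conjTranspose_smul, add_comm]
  · rw [← LinearMap.BilinForm.apply_toDual_symm_apply (hB := reTracePairing_nondegenerate) f X,
      reTracePairing_apply]
    refine Finset.sum_congr rfl fun i _ => ?_
    rw [smul_mul, trace_smul, add_mul, trace_add, Complex.real_smul, Complex.re_ofReal_mul,
      Complex.add_re, (hX i).re_trace_conjTranspose_mul]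
    ring

open scoped Norms.L2Operator in
lemma exists_isHermitian_separating [DecidableEq k] {K : Set (ι → Matrix k k ℂ)}
    (hK : IsCompact K) (hKconv : Convex ℝ K) (hKherm : ∀ X ∈ K, ∀ i, (X i).IsHermitian)
    {X₀ : ι → Matrix k k ℂ} (hX₀ : ∀ i, (X₀ i).IsHermitian) (hX₀K : X₀ ∉ K) :
    ∃ H : ι → Matrix k k ℂ, (∀ i, (H i).IsHermitian) ∧
      ∀ X ∈ K, ∑ i, (H i * X i).trace.re < ∑ i, (H i * X₀ i).trace.re := by
  obtain ⟨f, u, hfK, hu⟩ := geometric_hahn_banach_closed_point hKconv hK.isClosed hX₀K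
  obtain ⟨H, hH, hf⟩ := exists_isHermitian_eq_sum_re_trace f.toLinearMap
  refine ⟨H, hH, fun X hX => ?_⟩
  have hlt := (hfK X hX).trans hu
  rwa [← ContinuousLinearMap.coe_coe, hf X (hKherm X hX), hf X₀ hX₀] at hlt

lemma sum_sigma_re_trace_add_mul {J : Type*} [Fintype J] {κ : J → Type*} [∀ j, Fintype (κ j)]
    (H X : (Σ j, κ j) → Matrix k k ℂ) (C : J → Matrix k k ℂ) :
    ∑ s, ((H s + C s.1) * X s).trace.re
      = ∑ s, (H s * X s).trace.re + ∑ j, (C j * ∑ x, X ⟨j, x⟩).trace.re := by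
  simp only [add_mul, trace_add, Complex.add_re, Finset.sum_add_distrib, Fintype.sum_sigma,
    Finset.mul_sum, trace_sum, Complex.re_sum]

end Matrix

section POVM

open scoped Matrix.Norms.L2Operator MatrixOrder

variable {ι k : Type*} [Fintype ι] [Fintype k] [DecidableEq k]

lemma IsPOVM.le_one {G : ι → Matrix k k ℂ} (hG : IsPOVM G) (i : ι) : G i ≤ 1 := by
  rw [← hG.2]
  exact Finset.single_le_sum (fun j _ => nonneg_iff_posSemidef.mpr (hG.1 j)) (Finset.mem_univ i)

lemma isCompact_setOf_isPOVM : IsCompact {G : ι → Matrix k k ℂ | IsPOVM G} := by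
  have hclosed : IsClosed {G : ι → Matrix k k ℂ | IsPOVM G} := by
    simp only [IsPOVM, ← nonneg_iff_posSemidef, Set.ofPred_and, Set.ofPred_forall]
    exact (isClosed_iInter fun i => isClosed_le continuous_const (continuous_apply i)).inter
      (isClosed_eq (continuous_finsetSum _ fun i _ => continuous_apply i) continuous_const)
  refine Metric.isCompact_of_isClosed_isBounded hclosed ?_
  refine isBounded_iff_forall_norm_le.mpr ⟨‖(1 : Matrix k k ℂ)‖, fun G hG => ?_⟩
  refine (pi_norm_le_iff_of_nonneg (norm_nonneg _)).mpr fun i => ?_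
  exact CStarAlgebra.norm_le_norm_of_nonneg_of_le (nonneg_iff_posSemidef.mpr (hG.1 i))
    (hG.le_one i)

lemma convex_setOf_isPOVM : Convex ℝ {G : ι → Matrix k k ℂ | IsPOVM G} := by
  intro G hG G' hG' a b ha hb hab
  refine ⟨fun i => ((hG.1 i).smul ha).add ((hG'.1 i).smul hb), ?_⟩
  simp only [Pi.add_apply, Pi.smul_apply, Finset.sum_add_distrib, ← Finset.smul_sum, hG.2, hG'.2,
    ← add_smul, hab, one_smul]

end POVM

section Marginal

variable {J : Type*} [Fintype J] [DecidableEq J] {κ : J → Type*} [∀ j, Fintype (κ j)]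
  [∀ j, DecidableEq (κ j)] {k : Type*}

def marginal (G : ((j : J) → κ j) → Matrix k k ℂ) (j : J) (x : κ j) : Matrix k k ℂ :=
  ∑ g with g j = x, G g

lemma IsPOVM.marginal [Fintype k] [DecidableEq k] {G : ((j : J) → κ j) → Matrix k k ℂ}
    (hG : IsPOVM G) (j : J) : IsPOVM (_root_.marginal G j) := by
  refine ⟨fun x => posSemidef_sum _ fun g _ => hG.1 g, ?_⟩
  rw [← hG.2, ← Finset.sum_fiberwise Finset.univ (fun g => g j) G]
  rfl

variable (J κ k) in
def marginalMap : (((j : J) → κ j) → Matrix k k ℂ) →ₗ[ℝ] ((Σ j, κ j) → Matrix k k ℂ) where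
  toFun G s := marginal G s.1 s.2
  map_add' _ _ := funext fun _ => Finset.sum_add_distrib
  map_smul' c _ := funext fun _ => (Finset.smul_sum (r := c) ..).symm

lemma marginalMap_apply (G : ((j : J) → κ j) → Matrix k k ℂ) (s : Σ j, κ j) :
    marginalMap J κ k G s = marginal G s.1 s.2 := rfl

end Marginal

open Module in
lemma finrank_vectorSpan_range_sigma_le {𝕜 V P : Type*} [DivisionRing 𝕜] [AddCommGroup V]
    [Module 𝕜 V] [AddTorsor V P] {J : Type*} [Fintype J] {κ : J → Type*} [∀ j, Fintype (κ j)]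
    [∀ j, DecidableEq (κ j)] (p : (Σ j, κ j) → P) (x₀ : ∀ j, κ j) (q : P)
    (hq : ∀ j, p ⟨j, x₀ j⟩ = q) :
    finrank 𝕜 (vectorSpan 𝕜 (Set.range p)) ≤ ∑ j, (Fintype.card (κ j) - 1) := by
  let p' : Option (Σ j, {x // x ≠ x₀ j}) → P := fun o => o.elim q fun s => p ⟨s.1, s.2⟩
  have hrange : Set.range p ⊆ Set.range p' := by
    rintro _ ⟨⟨j, x⟩, rfl⟩
    by_cases hx : x = x₀ j
    · exact ⟨none, by simp [p', hx, hq]⟩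
    · exact ⟨some ⟨j, x, hx⟩, rfl⟩
  refine (Submodule.finrank_mono (vectorSpan_mono 𝕜 hrange)).trans
    (finrank_vectorSpan_range_le 𝕜 p' ?_)
  simp [Fintype.card_option, Fintype.card_sigma, Fintype.card_subtype_compl]

section Compatibility

variable {d n : ℕ} {m : Fin n → ℕ}

lemma sCompat_iff_exists_marginal (A : (j : Fin n) → Fin (m j) → Matrix (Fin d) (Fin d) ℂ)
    (S₀ : Set (Matrix (Fin d) (Fin d) ℂ)) :
    SCompat A S₀ ↔ ∃ G, IsPOVM G ∧
      ∀ ρ ∈ S₀, ∀ j x, (ρ * marginal G j x).trace = (ρ * A j x).trace := by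
  simp only [SCompat, marginal, Finset.mul_sum, trace_sum]

lemma sCompat_fin_zero (A : (j : Fin n) → Fin (m j) → Matrix (Fin 0) (Fin 0) ℂ)
    (S₀ : Set (Matrix (Fin 0) (Fin 0) ℂ)) : SCompat A S₀ :=
  ⟨0, ⟨fun _ => PosSemidef.zero, Subsingleton.elim _ _⟩, fun _ _ _ _ => by simp [trace]⟩

lemma chiIncomp_le_finrank_vectorSpan_add_one
    {A : (j : Fin n) → Fin (m j) → Matrix (Fin d) (Fin d) ℂ} {S₀ : Set (Matrix (Fin d) (Fin d) ℂ)}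
    (hS₀ : ∀ ρ ∈ S₀, IsState ρ) (hinc : ¬ SCompat A S₀) :
    chiIncomp A ≤ Module.finrank ℝ (vectorSpan ℝ S₀) + 1 :=
  Nat.sInf_le ⟨S₀, hS₀, hinc, rfl⟩

lemma not_sCompat_range_smul {A : (j : Fin n) → Fin (m j) → Matrix (Fin d) (Fin d) ℂ}
    {P : (Σ j, Fin (m j)) → Matrix (Fin d) (Fin d) ℂ}
    (hP : ∀ G : ((j : Fin n) → Fin (m j)) → Matrix (Fin d) (Fin d) ℂ, IsPOVM G →
      ∑ s, (P s * marginal G s.1 s.2).trace.re < ∑ s, (P s * A s.1 s.2).trace.re)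
    {c : (Σ j, Fin (m j)) → ℝ} (hc : ∀ s, c s ≠ 0) :
    ¬ SCompat A (Set.range fun s => c s • P s) := by
  rw [sCompat_iff_exists_marginal]
  rintro ⟨G, hG, hagree⟩
  refine (hP G hG).ne (Finset.sum_congr rfl fun s _ => ?_)
  have h := hagree _ ⟨s, rfl⟩ s.1 s.2
  simp only [smul_mul, trace_smul, Complex.real_smul] at h
  rw [mul_right_injective₀ (Complex.ofReal_ne_zero.mpr (hc s)) h]

theorem exists_posDef_separating_of_not_sCompat
    {A : (j : Fin n) → Fin (m j) → Matrix (Fin d) (Fin d) ℂ} (hA : ∀ j, IsPOVM (A j))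
    (hinc : ¬ SCompat A {ρ | IsState ρ}) (x₀ : ∀ j, Fin (m j)) :
    ∃ (P : (Σ j, Fin (m j)) → Matrix (Fin d) (Fin d) ℂ) (t : ℝ), (∀ s, (P s).PosDef) ∧
      (∀ j, P ⟨j, x₀ j⟩ = t • 1) ∧
      ∀ G : ((j : Fin n) → Fin (m j)) → Matrix (Fin d) (Fin d) ℂ, IsPOVM G →
        ∑ s, (P s * marginal G s.1 s.2).trace.re < ∑ s, (P s * A s.1 s.2).trace.re := by
  have hnotMem : (fun s => A s.1 s.2) ∉ marginalMap (Fin n) (fun j => Fin (m j)) (Fin d) ''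
      {G | IsPOVM G} := by
    rintro ⟨G, hG, hGA⟩
    refine hinc ((sCompat_iff_exists_marginal A _).mpr ⟨G, hG, fun ρ _ j x => ?_⟩)
    rw [← congrFun hGA ⟨j, x⟩, marginalMap_apply]
  obtain ⟨H, hH, hsep⟩ := exists_isHermitian_separating (X₀ := fun s : Σ j, Fin (m j) => A s.1 s.2)
    (isCompact_setOf_isPOVM.image (LinearMap.continuous_of_finiteDimensional _))
    (convex_setOf_isPOVM.linear_image _)
    (by rintro _ ⟨G, hG, rfl⟩ s; exact ((hG.marginal s.1).1 s.2).isHermitian)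
    (fun s => ((hA s.1).1 s.2).isHermitian) hnotMem
  obtain ⟨t, ht⟩ := exists_posDef_add_smul_one fun s : (Σ j, Fin (m j)) =>
    (hH s).sub (hH ⟨s.1, x₀ s.1⟩)
  refine ⟨fun s => H s + (t • 1 - H ⟨s.1, x₀ s.1⟩), t, fun s => ?_, fun j => ?_, fun G hG => ?_⟩
  · simpa only [sub_add_eq_add_sub, add_sub_assoc] using ht s
  · exact add_sub_cancel _ _
  · rw [sum_sigma_re_trace_add_mul H _ fun j => t • 1 - H ⟨j, x₀ j⟩,
      sum_sigma_re_trace_add_mul H _ fun j => t • 1 - H ⟨j, x₀ j⟩]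
    simp only [(hG.marginal _).2, (hA _).2]
    exact add_lt_add_left (hsep _ ⟨G, hG, rfl⟩) _

end Compatibility

/-- For incompatible observables `A₁,…,A_n` with `m₁,…,m_n` outcomes there is a set of
states `S₀` of affine dimension at most `Σ_j m_j − n` on which they are
`S₀`-incompatible; hence `χ_incomp(A₁,…,A_n) ≤ Σ_j m_j − n + 1`. -/
theorem chiIncomp_upper_bound {d n : ℕ} {m : Fin n → ℕ}
    (A : (j : Fin n) → Fin (m j) → Matrix (Fin d) (Fin d) ℂ)
    (hA : ∀ j, IsPOVM (A j)) (hm : ∀ j, 1 ≤ m j)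
    (hinc : ¬ SCompat A {ρ | IsState ρ}) :
    (∃ S₀ : Set (Matrix (Fin d) (Fin d) ℂ),
      (∀ ρ ∈ S₀, IsState ρ) ∧ ¬ SCompat A S₀ ∧
      Module.finrank ℝ (vectorSpan ℝ S₀) ≤ (∑ j, m j) - n) ∧
    chiIncomp A ≤ (∑ j, m j) - n + 1 := by
  obtain rfl | hd := Nat.eq_zero_or_pos d
  · exact absurd (sCompat_fin_zero A _) hinc
  have : Nonempty (Fin d) := ⟨⟨0, hd⟩⟩
  let x₀ : ∀ j, Fin (m j) := fun j => ⟨0, hm j⟩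
  obtain ⟨P, t, hP, hPx₀, hsep⟩ := exists_posDef_separating_of_not_sCompat hA hinc x₀
  let normalize (M : Matrix (Fin d) (Fin d) ℂ) := M.trace.re⁻¹ • M
  let ρ := fun s => normalize (P s)
  have hstates : ∀ ρ' ∈ Set.range ρ, IsState ρ' := by
    rintro _ ⟨s, rfl⟩
    exact (hP s).isState_inv_re_trace_smul
  have hincomp : ¬ SCompat A (Set.range ρ) :=
    not_sCompat_range_smul hsep fun s => inv_ne_zero (Complex.pos_iff.mp (hP s).trace_pos).1.ne'
  have hdim : Module.finrank ℝ (vectorSpan ℝ (Set.range ρ)) ≤ (∑ j, m j) - n :=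
    calc _ ≤ ∑ j, (Fintype.card (Fin (m j)) - 1) :=
          finrank_vectorSpan_range_sigma_le ρ x₀ _ fun j => congrArg normalize (hPx₀ j)
      _ = (∑ j, m j) - n := by simp [Finset.sum_tsub_distrib _ fun j _ => hm j]
  exact ⟨⟨_, hstates, hincomp, hdim⟩,
    (chiIncomp_le_finrank_vectorSpan_add_one hstates hincomp).trans (by omega)⟩
end
end

section
/- On a d-dimensional Hilbert space, for any collection of incompatible observables D₁,…,D_n: 2 ≤ χ_incomp(D₁,…,D_n) ≤ d² and d ≤ χ_comp(D₁,…,D_n) ≤ d² − 1, and moreover χ_incomp(D₁,…,D_n) ≤ χ_comp(D₁,…,D_n) + 1. -/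
open Matrix ComplexOrder

noncomputable section

/-- Compatibility dimension. -/
def chiComp {d n : ℕ} {m : Fin n → ℕ}
    (A : (j : Fin n) → Fin (m j) → Matrix (Fin d) (Fin d) ℂ) : ℕ :=
  sSup {k : ℕ | ∃ S₀ : Set (Matrix (Fin d) (Fin d) ℂ),
    (∀ ρ ∈ S₀, IsState ρ) ∧ SCompat A S₀ ∧
    k = Module.finrank ℝ (vectorSpan ℝ S₀) + 1}

/-!
The states span an affine space whose direction consists of traceless self-adjoint matrices: a
proper subspace of the self-adjoint matrices, which have real dimension `d²`. Compatibility on `S₀`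
is a family of real-linear conditions on the states in `S₀`, so it passes to the affine span of
`S₀`. Hence a compatible set cannot span the state space, and adding to a compatible set of maximal
dimension one state outside its affine span gives an incompatible set of one more dimension.
Perfectly distinguishable states are compatible, which covers sets with at most one state and the
`d` diagonal pure states.
-/

open Module

theorem two_mul_finrank_selfAdjoint_le {A : Type*} [AddCommGroup A] [Module ℂ A]
    [StarAddMonoid A] [StarModule ℂ A] [Module ℝ A] [IsScalarTower ℝ ℂ A] [StarModule ℝ A]
    [FiniteDimensional ℝ A] :
    2 * finrank ℝ (selfAdjoint.submodule ℝ A) ≤ finrank ℝ A := by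
  let mulI : A ≃ₗ[ℝ] A :=
    (LinearEquiv.smulOfNeZero ℂ A Complex.I Complex.I_ne_zero).restrictScalars ℝ
  have hmulI :
      (selfAdjoint.submodule ℝ A).map (mulI : A →ₗ[ℝ] A) ≤ skewAdjoint.submodule ℝ A := by
    rintro _ ⟨x, hx, rfl⟩
    change star (Complex.I • x) = -(Complex.I • x)
    rw [star_smul, (hx : IsSelfAdjoint x).star_eq, Complex.star_def, Complex.conj_I, neg_smul]
  have hle := Submodule.finrank_mono hmulI
  rw [LinearEquiv.finrank_map_eq] at hle
  have : Module.Finite ℝ (selfAdjoint A) :=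
    (inferInstance : Module.Finite ℝ (selfAdjoint.submodule ℝ A))
  have : Module.Finite ℝ (skewAdjoint A) :=
    (inferInstance : Module.Finite ℝ (skewAdjoint.submodule ℝ A))
  have hsum := (StarModule.decomposeProdAdjoint ℝ A).finrank_eq
  rw [finrank_prod] at hsum
  change _ = finrank ℝ (selfAdjoint.submodule ℝ A) + finrank ℝ (skewAdjoint.submodule ℝ A)
    at hsum
  omega

theorem finrank_vectorSpan_lt_of_not_subset_affineSpan {k V P : Type*} [DivisionRing k]
    [AddCommGroup V] [Module k V] [AddTorsor V P] [FiniteDimensional k V] {s t : Set P}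
    (hs : s.Nonempty) (hst : s ⊆ t) (ht : ¬ t ⊆ affineSpan k s) :
    finrank k (vectorSpan k s) < finrank k (vectorSpan k t) := by
  have hlt : affineSpan k s < affineSpan k t :=
    lt_of_le_not_ge (affineSpan_mono k hst) fun h => ht ((subset_affineSpan k t).trans h)
  have := AffineSubspace.direction_lt_of_nonempty hlt (hs.affineSpan k)
  rw [direction_affineSpan, direction_affineSpan] at this
  exact Submodule.finrank_lt_finrank_of_lt this

section ProductDistribution

variable {ι : Type*} [Fintype ι] [DecidableEq ι] {κ : ι → Type*} [∀ i, Fintype (κ i)]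
  {R : Type*} [CommSemiring R] {p : ∀ i, κ i → R}

theorem sum_prod_eq_one (hp : ∀ i, ∑ x, p i x = 1) : ∑ g : ∀ i, κ i, ∏ i, p i (g i) = 1 := by
  simp [← Fintype.prod_sum, hp]

theorem sum_filter_apply_eq_prod [∀ i, DecidableEq (κ i)] (hp : ∀ i, ∑ x, p i x = 1)
    (j : ι) (x : κ j) :
    ∑ g ∈ Finset.univ.filter (fun g : ∀ i, κ i => g j = x), ∏ i, p i (g i) = p j x := by
  have hfilter : Finset.univ.filter (fun g : ∀ i, κ i => g j = x) =
      Fintype.piFinset (Function.update (fun i => Finset.univ) j {x}) := by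
    ext g
    simp only [Finset.mem_filter, Finset.mem_univ, true_and, Fintype.mem_piFinset]
    refine ⟨fun hg i => ?_, fun hg => by simpa using hg j⟩
    by_cases hi : i = j
    · subst hi; simp [hg]
    · simp [hi]
  rw [hfilter, ← Finset.prod_univ_sum, Finset.prod_eq_single j]
  · simp
  · intro i _ hi
    simp [hi, hp i]
  · simp

end ProductDistribution

section States

variable {n : Type*} [Fintype n] [DecidableEq n]

theorem Matrix.PosSemidef.trace_mul_nonneg_s9 {A B : Matrix n n ℂ} (hA : A.PosSemidef)
    (hB : B.PosSemidef) : 0 ≤ (A * B).trace := by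
  obtain ⟨C, rfl⟩ : ∃ C : Matrix n n ℂ, A = Cᴴ * C := by
    open scoped MatrixOrder in exact CStarAlgebra.nonneg_iff_eq_star_mul_self.mp hA.nonneg
  rw [Matrix.mul_assoc, Matrix.trace_mul_comm]
  exact (hB.mul_mul_conjTranspose_same C).trace_nonneg

theorem isState_single (i : n) : IsState (single i i (1 : ℂ)) :=
  ⟨diagonal_single i (1 : ℂ) ▸ PosSemidef.diagonal fun j => by
    rcases eq_or_ne j i with rfl | h <;> simp [*], trace_single_eq_same _ _⟩

theorem vectorSpan_le_of_isState {S : Set (Matrix n n ℂ)} (hS : ∀ ρ ∈ S, IsState ρ) :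
    vectorSpan ℝ S ≤
      selfAdjoint.submodule ℝ (Matrix n n ℂ) ⊓ LinearMap.ker (traceLinearMap n ℝ ℂ) := by
  rw [vectorSpan_def, Submodule.span_le]
  rintro _ ⟨a, ha, b, hb, rfl⟩
  refine ⟨((hS a ha).1.1.sub (hS b hb).1.1 : IsSelfAdjoint (a - b)), ?_⟩
  simp [trace_sub, (hS a ha).2, (hS b hb).2]

theorem finrank_vectorSpan_lt_of_isState [Nonempty n] {S : Set (Matrix n n ℂ)}
    (hS : ∀ ρ ∈ S, IsState ρ) : finrank ℝ (vectorSpan ℝ S) < Fintype.card n ^ 2 := by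
  -- the identity is self-adjoint but not traceless
  have hlt : vectorSpan ℝ S < selfAdjoint.submodule ℝ (Matrix n n ℂ) := by
    refine SetLike.lt_iff_le_and_exists.mpr
      ⟨fun x hx => (vectorSpan_le_of_isState hS hx).1, 1, IsSelfAdjoint.one _, fun h1 => ?_⟩
    have : (1 : Matrix n n ℂ).trace = 0 := (vectorSpan_le_of_isState hS h1).2
    simp [trace_one] at this
  have h2 := two_mul_finrank_selfAdjoint_le (A := Matrix n n ℂ)
  rw [finrank_matrix, Complex.finrank_real_complex] at h2
  have := Submodule.finrank_lt_finrank_of_lt hlt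
  nlinarith

end States

section Compatibility

variable {d n : ℕ} {m : Fin n → ℕ} {A : (j : Fin n) → Fin (m j) → Matrix (Fin d) (Fin d) ℂ}

theorem SCompat.of_subset_affineSpan {S₀ S₁ : Set (Matrix (Fin d) (Fin d) ℂ)}
    (h : SCompat A S₀) (hS : S₁ ⊆ affineSpan ℝ S₀) : SCompat A S₁ := by
  obtain ⟨G, hG, hmarg⟩ := h
  refine ⟨G, hG, fun ρ hρ j x => ?_⟩
  let L : Matrix (Fin d) (Fin d) ℂ →ₗ[ℝ] ℂ := traceLinearMap (Fin d) ℝ ℂ ∘ₗ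
    LinearMap.mulRight ℝ (∑ g ∈ Finset.univ.filter (fun g : (j : Fin n) → Fin (m j) => g j = x),
      G g - A j x)
  have hL : ∀ σ, L σ = 0 ↔
      ∑ g ∈ Finset.univ.filter (fun g : (j : Fin n) → Fin (m j) => g j = x), (σ * G g).trace =
        (σ * A j x).trace := by
    intro σ
    simp [L, Matrix.mul_sub, Finset.mul_sum, trace_sub, trace_sum, sub_eq_zero]
  have hker : S₀ ⊆ LinearMap.ker L := fun σ hσ => (hL σ).2 (hmarg σ hσ j x)
  exact (hL ρ).1 (Submodule.span_le.2 hker (affineSpan_subset_span (hS hρ)))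

theorem scompat_range_of_distinguishable (hA : ∀ j, IsPOVM (A j)) {ι : Type*} [Fintype ι]
    [DecidableEq ι] {F σ : ι → Matrix (Fin d) (Fin d) ℂ} (hF : IsPOVM F)
    (hσ : ∀ i, IsState (σ i)) (hσF : ∀ a b, (σ a * F b).trace = if a = b then 1 else 0) :
    SCompat A (Set.range σ) := by
  set p : ι → (j : Fin n) → Fin (m j) → ℂ := fun i j x => (σ i * A j x).trace
  have hp : ∀ i j, ∑ x, p i j x = 1 := fun i j => by
    simp only [p, ← trace_sum, ← Finset.mul_sum, (hA j).2, Matrix.mul_one, (hσ i).2]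
  -- measure `F` to learn `i`, then draw each outcome from the distribution of `A j` in `σ i`
  refine ⟨fun g => ∑ i, (∏ j, p i j (g j)) • F i, ⟨fun g => ?_, ?_⟩, ?_⟩
  · refine posSemidef_sum _ fun i _ => (hF.1 i).smul (Finset.prod_nonneg fun j _ => ?_)
    exact (hσ i).1.trace_mul_nonneg_s9 ((hA j).1 (g j))
  · rw [Finset.sum_comm]
    simp_rw [← Finset.sum_smul, sum_prod_eq_one (hp _), one_smul, hF.2]
  · rintro _ ⟨a, rfl⟩ j x
    have hG : ∀ g : (j : Fin n) → Fin (m j),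
        (σ a * ∑ i, (∏ j, p i j (g j)) • F i).trace = ∏ j, p a j (g j) := fun g => by
      simp [Finset.mul_sum, trace_sum, hσF]
    simp_rw [hG]
    exact sum_filter_apply_eq_prod (hp a) j x

theorem scompat_singleton (hA : ∀ j, IsPOVM (A j)) {ρ : Matrix (Fin d) (Fin d) ℂ}
    (hρ : IsState ρ) : SCompat A {ρ} := by
  simpa using scompat_range_of_distinguishable hA (F := fun _ : Unit => 1)
    ⟨fun _ => PosSemidef.one, by simp⟩ (fun _ => hρ) (by simp [hρ.2])

theorem scompat_of_subsingleton (hd : 0 < d) (hA : ∀ j, IsPOVM (A j))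
    {S : Set (Matrix (Fin d) (Fin d) ℂ)} (hS : ∀ ρ ∈ S, IsState ρ) (hsub : S.Subsingleton) :
    SCompat A S := by
  obtain ⟨ρ, hρ, hSρ⟩ : ∃ ρ, IsState ρ ∧ S ⊆ {ρ} := by
    rcases S.eq_empty_or_nonempty with rfl | ⟨ρ, hρ⟩
    · exact ⟨_, isState_single (⟨0, hd⟩ : Fin d), Set.empty_subset _⟩
    · exact ⟨ρ, hS ρ hρ, fun σ hσ => hsub hσ hρ⟩
  exact (scompat_singleton hA hρ).of_subset_affineSpan (hSρ.trans (subset_affineSpan ℝ _))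

theorem scompat_range_single (hA : ∀ j, IsPOVM (A j)) :
    SCompat A (Set.range fun i : Fin d => single i i (1 : ℂ)) :=
  scompat_range_of_distinguishable hA ⟨fun i => (isState_single i).1, sum_single_one⟩
    isState_single fun a b => by simp [trace_single_mul, single_apply, eq_comm]

end Compatibility

theorem finrank_vectorSpan_range_single_add_one {d : ℕ} (hd : 0 < d) :
    finrank ℝ (vectorSpan ℝ (Set.range fun i : Fin d => single i i (1 : ℂ))) + 1 = d := by
  have : Nonempty (Fin d) := ⟨⟨0, hd⟩⟩
  have hli : LinearIndependent ℂ fun i : Fin d => single i i (1 : ℂ) := by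
    convert (stdBasis ℂ (Fin d) (Fin d)).linearIndependent.comp (fun i => (i, i))
      fun i j h => (Prod.mk.inj h).1 using 1
    ext1 i
    simp [stdBasis_eq_single]
  simpa using (hli.restrict_scalars' ℝ).affineIndependent.finrank_vectorSpan_add_one

section Dimensions

variable {d n : ℕ} {m : Fin n → ℕ} {A : (j : Fin n) → Fin (m j) → Matrix (Fin d) (Fin d) ℂ}

theorem finrank_vectorSpan_add_one_le_sq (hd : 0 < d) {S : Set (Matrix (Fin d) (Fin d) ℂ)}
    (hS : ∀ ρ ∈ S, IsState ρ) : finrank ℝ (vectorSpan ℝ S) + 1 ≤ d ^ 2 := by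
  have : Nonempty (Fin d) := ⟨⟨0, hd⟩⟩
  simpa using finrank_vectorSpan_lt_of_isState (n := Fin d) hS

theorem le_chiComp (hd : 0 < d) {S : Set (Matrix (Fin d) (Fin d) ℂ)} (hS : ∀ ρ ∈ S, IsState ρ)
    (hc : SCompat A S) : finrank ℝ (vectorSpan ℝ S) + 1 ≤ chiComp A :=
  le_csSup ⟨d ^ 2, by rintro _ ⟨S', hS', -, rfl⟩; exact finrank_vectorSpan_add_one_le_sq hd hS'⟩
    ⟨S, hS, hc, rfl⟩

theorem chiIncomp_le {S : Set (Matrix (Fin d) (Fin d) ℂ)} (hS : ∀ ρ ∈ S, IsState ρ)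
    (hc : ¬ SCompat A S) : chiIncomp A ≤ finrank ℝ (vectorSpan ℝ S) + 1 :=
  Nat.sInf_le ⟨S, hS, hc, rfl⟩

theorem exists_scompat_finrank_vectorSpan_add_one_eq_chiComp (hd : 0 < d)
    (hA : ∀ j, IsPOVM (A j)) : ∃ S : Set (Matrix (Fin d) (Fin d) ℂ), (∀ ρ ∈ S, IsState ρ) ∧
      SCompat A S ∧ finrank ℝ (vectorSpan ℝ S) + 1 = chiComp A := by
  obtain ⟨S, hS, hc, h⟩ : chiComp A ∈ {k | ∃ S : Set (Matrix (Fin d) (Fin d) ℂ),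
      (∀ ρ ∈ S, IsState ρ) ∧ SCompat A S ∧ k = finrank ℝ (vectorSpan ℝ S) + 1} := Nat.sSup_mem
    ⟨_, _, by rintro _ ⟨i, rfl⟩; exact isState_single i, scompat_range_single hA, rfl⟩
    ⟨d ^ 2, by rintro _ ⟨S', hS', -, rfl⟩; exact finrank_vectorSpan_add_one_le_sq hd hS'⟩
  exact ⟨S, hS, hc, h.symm⟩

theorem dim_le_chiComp (hd : 0 < d) (hA : ∀ j, IsPOVM (A j)) : d ≤ chiComp A := by
  have := le_chiComp hd (by rintro _ ⟨i, rfl⟩; exact isState_single i) (scompat_range_single hA)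
  rwa [finrank_vectorSpan_range_single_add_one hd] at this

theorem finrank_vectorSpan_pos_of_not_scompat (hd : 0 < d) (hA : ∀ j, IsPOVM (A j))
    {S : Set (Matrix (Fin d) (Fin d) ℂ)} (hS : ∀ ρ ∈ S, IsState ρ) (hc : ¬ SCompat A S) :
    0 < finrank ℝ (vectorSpan ℝ S) := by
  rw [pos_iff_ne_zero, Ne, Submodule.finrank_eq_zero, vectorSpan_eq_bot_iff_subsingleton]
  exact fun hsub => hc (scompat_of_subsingleton hd hA hS hsub)

theorem one_lt_of_not_scompat (hd : 0 < d) (hA : ∀ j, IsPOVM (A j))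
    (hinc : ¬ SCompat A {ρ | IsState ρ}) : 1 < d := by
  have h₁ :=
    finrank_vectorSpan_pos_of_not_scompat hd hA (S := {ρ | IsState ρ}) (fun _ h => h) hinc
  have h₂ := finrank_vectorSpan_add_one_le_sq hd (S := {ρ | IsState ρ}) fun _ h => h
  exact (Nat.one_lt_pow_iff two_ne_zero).mp (by omega)

theorem finrank_vectorSpan_lt_of_scompat (hd : 0 < d) (hA : ∀ j, IsPOVM (A j))
    (hinc : ¬ SCompat A {ρ | IsState ρ}) {S : Set (Matrix (Fin d) (Fin d) ℂ)}
    (hS : ∀ ρ ∈ S, IsState ρ) (hc : SCompat A S) :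
    finrank ℝ (vectorSpan ℝ S) <
      finrank ℝ (vectorSpan ℝ {ρ : Matrix (Fin d) (Fin d) ℂ | IsState ρ}) := by
  rcases S.eq_empty_or_nonempty with rfl | hne
  · rw [vectorSpan_empty, finrank_bot]
    exact finrank_vectorSpan_pos_of_not_scompat hd hA (S := {ρ | IsState ρ}) (fun _ h => h) hinc
  · exact finrank_vectorSpan_lt_of_not_subset_affineSpan hne hS
      fun h => hinc (hc.of_subset_affineSpan h)

theorem two_le_chiIncomp (hd : 0 < d) (hA : ∀ j, IsPOVM (A j))
    (hinc : ¬ SCompat A {ρ | IsState ρ}) : 2 ≤ chiIncomp A :=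
  le_csInf ⟨_, {ρ | IsState ρ}, fun _ h => h, hinc, rfl⟩ fun _ ⟨_, hS, hc, hk⟩ =>
    hk ▸ Nat.succ_le_succ (finrank_vectorSpan_pos_of_not_scompat hd hA hS hc)

theorem chiComp_le_sq_sub_one (hd : 0 < d) (hA : ∀ j, IsPOVM (A j))
    (hinc : ¬ SCompat A {ρ | IsState ρ}) : chiComp A ≤ d ^ 2 - 1 := by
  refine csSup_le' ?_
  rintro _ ⟨S, hS, hc, rfl⟩
  have h₁ := finrank_vectorSpan_lt_of_scompat hd hA hinc hS hc
  have h₂ := finrank_vectorSpan_add_one_le_sq hd (S := {ρ | IsState ρ}) fun _ h => h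
  omega

theorem chiIncomp_le_chiComp_add_one (hd : 0 < d) (hA : ∀ j, IsPOVM (A j))
    (hinc : ¬ SCompat A {ρ | IsState ρ}) : chiIncomp A ≤ chiComp A + 1 := by
  obtain ⟨S, hS, hc, hSmax⟩ := exists_scompat_finrank_vectorSpan_add_one_eq_chiComp hd hA
  have hne : S.Nonempty := by
    rw [Set.nonempty_iff_ne_empty]
    rintro rfl
    rw [vectorSpan_empty, finrank_bot] at hSmax
    have := dim_le_chiComp hd hA
    have := one_lt_of_not_scompat hd hA hinc
    omega
  obtain ⟨ρ, hρ, hρS⟩ : ∃ ρ, IsState ρ ∧ ρ ∉ affineSpan ℝ S := by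
    by_contra! h
    exact hinc (hc.of_subset_affineSpan h)
  have hT : ∀ σ ∈ insert ρ S, IsState σ := Set.forall_mem_insert.2 ⟨hρ, hS⟩
  have hlt := finrank_vectorSpan_lt_of_not_subset_affineSpan hne (Set.subset_insert ρ S)
    fun h => hρS (h (Set.mem_insert ρ S))
  have hle := finrank_vectorSpan_insert_le_set ℝ S ρ
  have hTinc : ¬ SCompat A (insert ρ S) := fun hTc => by
    have := le_chiComp hd hT hTc
    omega
  have := chiIncomp_le hT hTinc
  omega

end Dimensions

/-- For any incompatible collection of observables on a `d`-dimensional space: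
`2 ≤ χ_incomp ≤ d²`, `d ≤ χ_comp ≤ d² − 1`, and `χ_incomp ≤ χ_comp + 1`. -/
theorem chi_dimension_bounds {d n : ℕ} {m : Fin n → ℕ} (hd : 0 < d)
    (D : (j : Fin n) → Fin (m j) → Matrix (Fin d) (Fin d) ℂ)
    (hD : ∀ j, IsPOVM (D j))
    (hinc : ¬ SCompat D {ρ | IsState ρ}) :
    2 ≤ chiIncomp D ∧ chiIncomp D ≤ d ^ 2 ∧
    d ≤ chiComp D ∧ chiComp D ≤ d ^ 2 - 1 ∧
    chiIncomp D ≤ chiComp D + 1 := by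
  have hI := chiIncomp_le_chiComp_add_one hd hD hinc
  have hC := chiComp_le_sq_sub_one hd hD hinc
  have := pow_pos hd 2
  exact ⟨two_le_chiIncomp hd hD hinc, by omega, dim_le_chiComp hd hD, hC, hI⟩
end
end

section
/- For qubit states ρ₀ = I/2 and ρ₁ = |0⟩⟨0|, and any two qubit channels Λ₁, Λ₂, the channels Λ'_j(ρ) := Σ_{i=0}^{1} ⟨i|ρ|i⟩ Λ_j(|i⟩⟨i|) satisfy Λ'_j(ρ) = Λ_j(ρ) for ρ ∈ {I/2, |0⟩⟨0|}, and the channel Λ(ρ) := Σ_{i=0}^{1} ⟨i|ρ|i⟩ Λ₁(|i⟩⟨i|) ⊗ Λ₂(|i⟩⟨i|) is a joint channel with tr₂ Λ(ρ) = Λ'₁(ρ) and tr₁ Λ(ρ) = Λ'₂(ρ) for all states ρ. Hence any pair of qubit channels is {I/2, |0⟩⟨0|}-compatible. -/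
/-!
Measuring in the computational basis does not disturb the diagonal states `I/2` and `|0⟩⟨0|`,
so every channel agrees on them with its measure-and-prepare version
`ρ ↦ Σᵢ ⟨i|ρ|i⟩ Λ(|i⟩⟨i|)`. Two measure-and-prepare channels built on the same measurement are
implemented jointly by measuring once, copying the outcome `i` and preparing
`Λ₁(|i⟩⟨i|) ⊗ Λ₂(|i⟩⟨i|)`. As a composition of channels (dephasing, copying, `Λ₁ ⊗ Λ₂`) this is
again a channel, and its marginals are the two measure-and-prepare channels because `Λ₁` and `Λ₂`
preserve the trace of `|i⟩⟨i|`.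
-/

open Matrix Kronecker ComplexOrder

noncomputable section

/-- Partial trace over the second qubit. -/
def ptr2 (M : Matrix (Fin 2 × Fin 2) (Fin 2 × Fin 2) ℂ) : Mat2 :=
  Matrix.of fun i j => ∑ k, M (i, k) (j, k)

/-- Partial trace over the first qubit. -/
def ptr1 (M : Matrix (Fin 2 × Fin 2) (Fin 2 × Fin 2) ℂ) : Mat2 :=
  Matrix.of fun i j => ∑ k, M (k, i) (k, j)

/-- The projection `|i⟩⟨i|`. -/
def proj (i : Fin 2) : Mat2 := Matrix.single i i (1 : ℂ)

namespace Matrix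

theorem kronecker_sum_sum {R ι κ l m l' m' : Type*} [CommSemiring R] [Fintype ι] [Fintype κ]
    (A : ι → Matrix l m R) (B : κ → Matrix l' m' R) :
    (∑ a, A a) ⊗ₖ (∑ b, B b) = ∑ p : ι × κ, A p.1 ⊗ₖ B p.2 := by
  ext
  simp only [kroneckerMap_apply, sum_apply, Finset.sum_mul_sum, Fintype.sum_prod_type]

theorem sum_diag_smul_map_single {R m M : Type*} [Semiring R] [AddCommMonoid M] [Module R M]
    [Fintype m] [DecidableEq m] (Φ : Matrix m m R →ₗ[R] M) {ρ : Matrix m m R} (hρ : ρ.IsDiag) :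
    ∑ i, ρ i i • Φ (single i i 1) = Φ ρ := by
  simp only [← map_smul, ← map_sum, smul_single, smul_eq_mul, mul_one, sum_single_eq_diagonal]
  exact congrArg Φ hρ.diagonal_diag

section Kraus

variable {R : Type*} [CommRing R] [StarRing R]
variable {ι κ l m n : Type*} [Fintype ι]

def krausMap [Fintype m] (K : ι → Matrix n m R) : Matrix m m R →ₗ[R] Matrix n n R where
  toFun ρ := ∑ a, K a * ρ * (K a)ᴴ
  map_add' ρ σ := by simp only [Matrix.mul_add, Matrix.add_mul, Finset.sum_add_distrib]
  map_smul' c ρ := by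
    simp only [Matrix.mul_smul, Matrix.smul_mul, Finset.smul_sum, RingHom.id_apply]

theorem krausMap_apply [Fintype m] (K : ι → Matrix n m R) (ρ : Matrix m m R) :
    krausMap K ρ = ∑ a, K a * ρ * (K a)ᴴ :=
  rfl

theorem trace_krausMap [Fintype m] [Fintype n] [DecidableEq m] {K : ι → Matrix n m R}
    (hK : ∑ a, (K a)ᴴ * K a = 1) (ρ : Matrix m m R) : (krausMap K ρ).trace = ρ.trace := by
  simp only [krausMap_apply, trace_sum, trace_mul_cycle _ ρ]
  rw [← trace_sum, ← Finset.sum_mul, hK, Matrix.one_mul]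

theorem krausMap_krausMap [Fintype κ] [Fintype m] [Fintype n] (L : κ → Matrix l n R)
    (K : ι → Matrix n m R) (ρ : Matrix m m R) :
    krausMap L (krausMap K ρ) = krausMap (fun p : κ × ι => L p.1 * K p.2) ρ := by
  simp only [krausMap_apply, Fintype.sum_prod_type, conjTranspose_mul, Matrix.sum_mul,
    Matrix.mul_sum, Matrix.mul_assoc]

theorem sum_conjTranspose_mul_comp [Fintype κ] [Fintype l] [Fintype n] [DecidableEq m]
    [DecidableEq n] {L : κ → Matrix l n R} {K : ι → Matrix n m R}
    (hL : ∑ b, (L b)ᴴ * L b = 1) (hK : ∑ a, (K a)ᴴ * K a = 1) :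
    ∑ p : κ × ι, (L p.1 * K p.2)ᴴ * (L p.1 * K p.2) = 1 := by
  calc ∑ p : κ × ι, (L p.1 * K p.2)ᴴ * (L p.1 * K p.2)
      = ∑ a, (K a)ᴴ * (∑ b, (L b)ᴴ * L b) * K a := by
        rw [Fintype.sum_prod_type, Finset.sum_comm]
        simp only [conjTranspose_mul, Matrix.mul_sum, Matrix.sum_mul, Matrix.mul_assoc]
    _ = 1 := by simp only [hL, Matrix.mul_one, hK]

theorem krausMap_kronecker {m' n' : Type*} [Fintype κ] [Fintype m] [Fintype m']
    (K : ι → Matrix n m R) (L : κ → Matrix n' m' R) (A : Matrix m m R) (B : Matrix m' m' R) :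
    krausMap (fun p : ι × κ => K p.1 ⊗ₖ L p.2) (A ⊗ₖ B) = krausMap K A ⊗ₖ krausMap L B := by
  simp only [krausMap_apply, kronecker_sum_sum, conjTranspose_kronecker, mul_kronecker_mul]

theorem sum_conjTranspose_mul_kronecker {m' n' : Type*} [Fintype κ] [Fintype n] [Fintype n']
    [DecidableEq m] [DecidableEq m'] {K : ι → Matrix n m R} {L : κ → Matrix n' m' R}
    (hK : ∑ a, (K a)ᴴ * K a = 1) (hL : ∑ b, (L b)ᴴ * L b = 1) :
    ∑ p : ι × κ, (K p.1 ⊗ₖ L p.2)ᴴ * (K p.1 ⊗ₖ L p.2) = 1 := by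
  simp only [conjTranspose_kronecker, ← mul_kronecker_mul]
  rw [← kronecker_sum_sum (fun a => (K a)ᴴ * K a) (fun b => (L b)ᴴ * L b), hK, hL,
    one_kronecker_one]

theorem krausMap_single_diag [Fintype m] [DecidableEq m] (ρ : Matrix m m R) :
    krausMap (fun i : m => single (i, i) i (1 : R)) ρ =
      ∑ i, ρ i i • (single i i (1 : R) ⊗ₖ single i i (1 : R)) := by
  simp only [krausMap_apply, conjTranspose_single, star_one, single_mul_mul_single, one_mul,
    mul_one, single_kronecker_single, smul_single, smul_eq_mul]

theorem sum_conjTranspose_single_diag_mul [Fintype m] [DecidableEq m] :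
    ∑ i : m, (single (i, i) i (1 : R))ᴴ * single (i, i) i (1 : R) = 1 := by
  simp only [conjTranspose_single, star_one, single_mul_single_same, mul_one, sum_single_one]

theorem exists_fin_krausMap_eq [Fintype m] [DecidableEq m] [Fintype n] (K : ι → Matrix n m R)
    (hK : ∑ a, (K a)ᴴ * K a = 1) :
    ∃ (r : ℕ) (L : Fin r → Matrix n m R),
      ∑ i, (L i)ᴴ * L i = 1 ∧ ∀ ρ, krausMap L ρ = krausMap K ρ := by
  let e := Fintype.equivFin ι
  refine ⟨Fintype.card ι, fun i => K (e.symm i), ?_, fun ρ => ?_⟩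
  · rwa [e.symm.sum_comp (fun a => (K a)ᴴ * K a)]
  · simp only [krausMap_apply]
    exact e.symm.sum_comp (fun a => K a * ρ * (K a)ᴴ)

/-- The Kraus operators are `(K a ⊗ L b) |i i⟩⟨i|`: measure in the standard basis, copy the
outcome, then apply `krausMap K ⊗ krausMap L`. -/
theorem exists_kraus_eq_sum_diag_smul_kronecker [Fintype κ] [Fintype m] [DecidableEq m]
    {n' : Type*} [Fintype n] [Fintype n'] {K : ι → Matrix n m R} {L : κ → Matrix n' m R}
    (hK : ∑ a, (K a)ᴴ * K a = 1) (hL : ∑ b, (L b)ᴴ * L b = 1) :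
    ∃ (r : ℕ) (M : Fin r → Matrix (n × n') m R), ∑ i, (M i)ᴴ * M i = 1 ∧ ∀ ρ,
      krausMap M ρ = ∑ i, ρ i i • (krausMap K (single i i 1) ⊗ₖ krausMap L (single i i 1)) := by
  obtain ⟨r, M, hM, hMρ⟩ := exists_fin_krausMap_eq _
    (sum_conjTranspose_mul_comp (sum_conjTranspose_mul_kronecker hK hL)
      (sum_conjTranspose_single_diag_mul (m := m)))
  refine ⟨r, M, hM, fun ρ => ?_⟩
  rw [hMρ, ← krausMap_krausMap (fun p : ι × κ => K p.1 ⊗ₖ L p.2)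
    (fun i : m => single (i, i) i (1 : R)), krausMap_single_diag, map_sum]
  simp only [map_smul, krausMap_kronecker]

end Kraus

end Matrix

theorem isDiag_proj (i : Fin 2) : (proj i).IsDiag := by
  intro j k hjk
  exact if_neg fun h => hjk (h.1.symm.trans h.2)

theorem ptr2_kronecker (A B : Mat2) : ptr2 (A ⊗ₖ B) = B.trace • A := by
  ext i j
  simp only [ptr2, of_apply, kroneckerMap_apply, trace, diag_apply, Matrix.smul_apply, smul_eq_mul,
    Finset.sum_mul, mul_comm (A i j)]

theorem ptr1_kronecker (A B : Mat2) : ptr1 (A ⊗ₖ B) = A.trace • B := by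
  ext i j
  simp only [ptr1, of_apply, kroneckerMap_apply, trace, diag_apply, Matrix.smul_apply, smul_eq_mul,
    Finset.sum_mul]

theorem ptr2_sum_smul {ι : Type*} [Fintype ι] (c : ι → ℂ)
    (M : ι → Matrix (Fin 2 × Fin 2) (Fin 2 × Fin 2) ℂ) :
    ptr2 (∑ i, c i • M i) = ∑ i, c i • ptr2 (M i) := by
  ext i j
  simp only [ptr2, of_apply, Matrix.sum_apply, Matrix.smul_apply, smul_eq_mul, Finset.mul_sum]
  exact Finset.sum_comm

theorem ptr1_sum_smul {ι : Type*} [Fintype ι] (c : ι → ℂ)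
    (M : ι → Matrix (Fin 2 × Fin 2) (Fin 2 × Fin 2) ℂ) :
    ptr1 (∑ i, c i • M i) = ∑ i, c i • ptr1 (M i) := by
  ext i j
  simp only [ptr1, of_apply, Matrix.sum_apply, Matrix.smul_apply, smul_eq_mul, Finset.mul_sum]
  exact Finset.sum_comm

/-- For qubit states `ρ₀ = I/2` and `ρ₁ = |0⟩⟨0|` and any two qubit channels `Λ₁`, `Λ₂`
(given by Kraus operators `K₁`, `K₂`), the measure-and-prepare channels
`Λ'_j(ρ) = Σᵢ ⟨i|ρ|i⟩ Λ_j(|i⟩⟨i|)` agree with `Λ_j` on `{I/2, |0⟩⟨0|}`, and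
`Λ(ρ) = Σᵢ ⟨i|ρ|i⟩ Λ₁(|i⟩⟨i|) ⊗ Λ₂(|i⟩⟨i|)` is a joint channel with
`tr₂ Λ(ρ) = Λ'₁(ρ)` and `tr₁ Λ(ρ) = Λ'₂(ρ)` for all states `ρ`. Hence any pair of
qubit channels is `{I/2, |0⟩⟨0|}`-compatible. -/
theorem qubit_channels_two_state_compatible
    {r₁ r₂ : ℕ} (K₁ : Fin r₁ → Mat2) (K₂ : Fin r₂ → Mat2)
    (hK₁ : ∑ i, (K₁ i)ᴴ * K₁ i = 1) (hK₂ : ∑ i, (K₂ i)ᴴ * K₂ i = 1) :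
    let Λ₁ : Mat2 → Mat2 := fun ρ => ∑ i, K₁ i * ρ * (K₁ i)ᴴ
    let Λ₂ : Mat2 → Mat2 := fun ρ => ∑ i, K₂ i * ρ * (K₂ i)ᴴ
    let Λ'₁ : Mat2 → Mat2 := fun ρ => ∑ i : Fin 2, (ρ i i) • Λ₁ (proj i)
    let Λ'₂ : Mat2 → Mat2 := fun ρ => ∑ i : Fin 2, (ρ i i) • Λ₂ (proj i)
    let Λ : Mat2 → Matrix (Fin 2 × Fin 2) (Fin 2 × Fin 2) ℂ :=
      fun ρ => ∑ i : Fin 2, (ρ i i) • (Λ₁ (proj i) ⊗ₖ Λ₂ (proj i))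
    (∀ ρ ∈ ({((1 : ℂ)/2) • (1 : Mat2), proj 0} : Set Mat2),
        Λ'₁ ρ = Λ₁ ρ ∧ Λ'₂ ρ = Λ₂ ρ) ∧
    (∀ ρ : Mat2, ptr2 (Λ ρ) = Λ'₁ ρ ∧ ptr1 (Λ ρ) = Λ'₂ ρ) ∧
    (∃ (r : ℕ) (L : Fin r → Matrix (Fin 2 × Fin 2) (Fin 2) ℂ),
      (∑ i, (L i)ᴴ * L i = 1) ∧ ∀ ρ : Mat2, ∑ i, L i * ρ * (L i)ᴴ = Λ ρ) := by
  intro Λ₁ Λ₂ Λ'₁ Λ'₂ Λ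
  have trace_proj {r : ℕ} {K : Fin r → Mat2} (hK : ∑ i, (K i)ᴴ * K i = 1) (i : Fin 2) :
      (krausMap K (proj i)).trace = 1 :=
    (trace_krausMap hK _).trans (trace_single_eq_same i 1)
  refine ⟨fun ρ hρ => ?_, fun ρ => ⟨?_, ?_⟩, ?_⟩
  · have hdiag : ρ.IsDiag := by
      rcases hρ with rfl | rfl
      exacts [isDiag_smul_one _ _, isDiag_proj 0]
    exact ⟨sum_diag_smul_map_single (krausMap K₁) hdiag,
      sum_diag_smul_map_single (krausMap K₂) hdiag⟩
  · change ptr2 (∑ i, ρ i i • (krausMap K₁ (proj i) ⊗ₖ krausMap K₂ (proj i))) =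
      ∑ i, ρ i i • krausMap K₁ (proj i)
    simp only [ptr2_sum_smul, ptr2_kronecker, trace_proj hK₂, one_smul]
  · change ptr1 (∑ i, ρ i i • (krausMap K₁ (proj i) ⊗ₖ krausMap K₂ (proj i))) =
      ∑ i, ρ i i • krausMap K₂ (proj i)
    simp only [ptr1_sum_smul, ptr1_kronecker, trace_proj hK₁, one_smul]
  · exact exists_kraus_eq_sum_diag_smul_kronecker hK₁ hK₂
end
end

section
/- Let n = (n_x, n_y) ∈ ℝ² with |n| > 1 and n_x < 0, and let 0 < t ≤ 1. The set of λ ∈ ℝ for which both 1 + λ − |(t,0) + λn| ≥ 0 and 1 + λ + |(t,0) + λn| ≤ 2 hold is the interval [λ₁, λ₂] with λ₁ = (1 − n_x t − √((1 − n_x t)² + (|n|² − 1)(1 − t²)))/(|n|² − 1) and λ₂ = min{1, (−1 − n_x t + √((1 + n_x t)² + (|n|² − 1)(1 − t²)))/(|n|² − 1)}. -/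
open Real Set

noncomputable section

/-- Euclidean norm on `ℝ²`. -/
def nrm (v : ℝ × ℝ) : ℝ := Real.sqrt (v.1 ^ 2 + v.2 ^ 2)

private lemma root_lower (A c s x d : ℝ) (hA : 0 < A) (hs : s ^ 2 = c ^ 2 + A * d)
    (hs' : 0 ≤ s) (hq : A * x ^ 2 - 2 * x * c - d ≤ 0) : c - s ≤ x * A := by
  nlinarith [mul_nonneg hA.le (neg_nonneg.2 hq), sq_nonneg (x * A - c + s)]

private lemma root_upper (A c s x d : ℝ) (hA : 0 < A) (hs : s ^ 2 = c ^ 2 + A * d)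
    (hs' : 0 ≤ s) (hq : A * x ^ 2 + 2 * x * c - d ≤ 0) : x * A ≤ -c + s := by
  nlinarith [mul_nonneg hA.le (neg_nonneg.2 hq), sq_nonneg (x * A + c - s)]

private lemma root_upper_conv (A c s x d : ℝ) (hA : 0 < A) (hs : s ^ 2 = c ^ 2 + A * d)
    (hs' : 0 ≤ s) (hd : 0 ≤ d) (hxA : x * A ≤ -c + s) (hx : 0 ≤ x) :
    A * x ^ 2 + 2 * x * c - d ≤ 0 := by
  have hsc : -c ≤ s := by nlinarith [sq_nonneg (s + c), mul_nonneg hA.le hd]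
  have h1 : 0 ≤ s - (x * A + c) := by linarith
  have h2 : 0 ≤ s + (x * A + c) := by nlinarith [mul_nonneg hx hA.le]
  nlinarith [mul_nonneg h1 h2]

private lemma root_lower_conv (A c s x d : ℝ) (hA : 0 < A) (hs : s ^ 2 = c ^ 2 + A * d)
    (hs' : 0 ≤ s) (hc : 0 ≤ c) (hxA : c - s ≤ x * A) (hx : x ≤ 0) :
    A * x ^ 2 - 2 * x * c - d ≤ 0 := by
  have h1 : 0 ≤ s + (x * A - c) := by linarith
  have h2 : 0 ≤ s - (x * A - c) := by nlinarith [mul_nonneg (neg_nonneg.2 hx) hA.le]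
  nlinarith [mul_nonneg h1 h2]

private lemma lam_lower (A c s x : ℝ) (hA : 0 < A) (hc : 1 ≤ c)
    (hsq : s ^ 2 ≤ (c + A) ^ 2) (hs' : 0 ≤ s) (hxA : c - s ≤ x * A) : -1 ≤ x := by
  have hcA : 0 ≤ c + A := by linarith
  have : s ≤ c + A := by nlinarith
  nlinarith

/-- For `n ∈ ℝ²` with `|n| > 1`, `n_x < 0`, and `0 < t ≤ 1`, the set of `λ` such that
`1 + λ − |(t,0) + λn| ≥ 0` and `1 + λ + |(t,0) + λn| ≤ 2` is exactly the interval
`[λ₁, λ₂]` with the stated endpoints. -/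
theorem effect_lambda_interval (n : ℝ × ℝ) (hn : 1 < nrm n) (hnx : n.1 < 0)
    (t : ℝ) (ht : 0 < t) (ht1 : t ≤ 1) :
    ∀ lam : ℝ,
      (0 ≤ 1 + lam - nrm (t + lam * n.1, lam * n.2) ∧
        1 + lam + nrm (t + lam * n.1, lam * n.2) ≤ 2) ↔
      lam ∈ Icc
        ((1 - n.1 * t -
            Real.sqrt ((1 - n.1 * t) ^ 2 + (nrm n ^ 2 - 1) * (1 - t ^ 2))) /
          (nrm n ^ 2 - 1))
        (min 1
          ((-1 - n.1 * t +
              Real.sqrt ((1 + n.1 * t) ^ 2 + (nrm n ^ 2 - 1) * (1 - t ^ 2))) /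
            (nrm n ^ 2 - 1))) := by
  intro lam
  have hnn : 0 ≤ n.1 ^ 2 + n.2 ^ 2 := by positivity
  have hN2 : nrm n ^ 2 = n.1 ^ 2 + n.2 ^ 2 := Real.sq_sqrt hnn
  have hnrm0 : 0 ≤ nrm n := Real.sqrt_nonneg _
  have hA : 0 < nrm n ^ 2 - 1 := by nlinarith
  set A := nrm n ^ 2 - 1 with hAdef
  have hA2 : A = n.1 ^ 2 + n.2 ^ 2 - 1 := by rw [hAdef, hN2]
  have ht2 : 0 ≤ 1 - t ^ 2 := by nlinarith
  have hnt : 0 < -(n.1 * t) := by nlinarith [mul_pos (neg_pos.mpr hnx) ht]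
  have he : 0 ≤ (t + lam * n.1) ^ 2 + (lam * n.2) ^ 2 := by positivity
  have hf2 : nrm (t + lam * n.1, lam * n.2) ^ 2
      = (t + lam * n.1) ^ 2 + (lam * n.2) ^ 2 := Real.sq_sqrt he
  have hf0 : 0 ≤ nrm (t + lam * n.1, lam * n.2) := Real.sqrt_nonneg _
  set f := nrm (t + lam * n.1, lam * n.2) with hfdef
  have hD1 : 0 ≤ (1 - n.1 * t) ^ 2 + A * (1 - t ^ 2) := by
    nlinarith [mul_nonneg hA.le ht2, sq_nonneg (1 - n.1 * t)]
  have hD2 : 0 ≤ (1 + n.1 * t) ^ 2 + A * (1 - t ^ 2) := by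
    nlinarith [mul_nonneg hA.le ht2, sq_nonneg (1 + n.1 * t)]
  set s1 := Real.sqrt ((1 - n.1 * t) ^ 2 + A * (1 - t ^ 2)) with hs1def
  set s2 := Real.sqrt ((1 + n.1 * t) ^ 2 + A * (1 - t ^ 2)) with hs2def
  have hs1 : s1 ^ 2 = (1 - n.1 * t) ^ 2 + A * (1 - t ^ 2) := Real.sq_sqrt hD1
  have hs2 : s2 ^ 2 = (1 + n.1 * t) ^ 2 + A * (1 - t ^ 2) := Real.sq_sqrt hD2
  have hs1' : 0 ≤ s1 := Real.sqrt_nonneg _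
  have hs2' : 0 ≤ s2 := Real.sqrt_nonneg _
  rw [mem_Icc, le_min_iff, div_le_iff₀ hA, le_div_iff₀ hA]
  clear_value A f s1 s2
  clear hs1def hs2def hAdef hN2 hnrm0 hn hnn hD1 hD2 he
  constructor
  · rintro ⟨h1, h2⟩
    have hfsq1 : f ^ 2 ≤ (1 + lam) ^ 2 := pow_le_pow_left₀ hf0 (by linarith) 2
    have hfsq2 : f ^ 2 ≤ (1 - lam) ^ 2 := pow_le_pow_left₀ hf0 (by linarith) 2
    have hq1 : A * lam ^ 2 - 2 * lam * (1 - n.1 * t) - (1 - t ^ 2) ≤ 0 := by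
      rw [hA2]; linarith [hfsq1, hf2]
    have hq2 : A * lam ^ 2 + 2 * lam * (1 + n.1 * t) - (1 - t ^ 2) ≤ 0 := by
      rw [hA2]; linarith [hfsq2, hf2]
    refine ⟨root_lower A (1 - n.1 * t) s1 lam (1 - t ^ 2) hA hs1 hs1' hq1,
      by linarith,
      by have := root_upper A (1 + n.1 * t) s2 lam (1 - t ^ 2) hA hs2 hs2' hq2
         linarith⟩
  · rintro ⟨hl, hu1, hu2⟩
    have hq1neg : lam ≤ 0 → A * lam ^ 2 - 2 * lam * (1 - n.1 * t) - (1 - t ^ 2) ≤ 0 :=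
      fun h0 => root_lower_conv A (1 - n.1 * t) s1 lam (1 - t ^ 2) hA hs1 hs1'
        (by linarith [hs1, mul_nonneg hA.le ht2]) hl h0
    have hq2pos : 0 ≤ lam → A * lam ^ 2 + 2 * lam * (1 + n.1 * t) - (1 - t ^ 2) ≤ 0 :=
      fun h0 => root_upper_conv A (1 + n.1 * t) s2 lam (1 - t ^ 2) hA hs2 hs2' ht2
        (by linarith) h0
    have hq1 : A * lam ^ 2 - 2 * lam * (1 - n.1 * t) - (1 - t ^ 2) ≤ 0 := by
      rcases le_total lam 0 with h0 | h0
      · exact hq1neg h0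
      · have := hq2pos h0; linarith
    have hq2 : A * lam ^ 2 + 2 * lam * (1 + n.1 * t) - (1 - t ^ 2) ≤ 0 := by
      rcases le_total lam 0 with h0 | h0
      · have := hq1neg h0; linarith
      · exact hq2pos h0
    have hlam1 : -1 ≤ lam := by
      refine lam_lower A (1 - n.1 * t) s1 lam hA (by linarith) ?_ hs1' hl
      linarith [hs1, mul_nonneg hA.le
        (show 0 ≤ 1 + t ^ 2 - 2 * (n.1 * t) + A by linarith [sq_nonneg t])]
    have hfle1 : f ≤ 1 + lam := by
      have hee : (t + lam * n.1) ^ 2 + (lam * n.2) ^ 2 ≤ (1 + lam) ^ 2 := by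
        rw [hA2] at hq1; linarith [hq1]
      rw [hfdef]
      calc nrm (t + lam * n.1, lam * n.2)
          = Real.sqrt ((t + lam * n.1) ^ 2 + (lam * n.2) ^ 2) := rfl
        _ ≤ Real.sqrt ((1 + lam) ^ 2) := Real.sqrt_le_sqrt hee
        _ = 1 + lam := Real.sqrt_sq (by linarith)
    have hfle2 : f ≤ 1 - lam := by
      have hee : (t + lam * n.1) ^ 2 + (lam * n.2) ^ 2 ≤ (1 - lam) ^ 2 := by
        rw [hA2] at hq2; linarith [hq2]
      rw [hfdef]
      calc nrm (t + lam * n.1, lam * n.2)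
          = Real.sqrt ((t + lam * n.1) ^ 2 + (lam * n.2) ^ 2) := rfl
        _ ≤ Real.sqrt ((1 - lam) ^ 2) := Real.sqrt_le_sqrt hee
        _ = 1 - lam := Real.sqrt_sq (by linarith)
    exact ⟨by linarith, by linarith⟩
end
end
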